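/- arXiv:1701.09149 — 5 statements merged into one kernel-verified Lean document; each statement's English description precedes it below -/
import Mathlib

section
/- Let n ≥ 3 be odd and ζ ∈ ℂ a primitive n-th root of unity. Let σ_ρ be the ℂ-algebra automorphism of ℂ[x,y,z] determined by x ↦ ζx, y ↦ ζ⁻¹y, z ↦ z, and σ_ε the ℂ-algebra automorphism determined by x ↦ y, y ↦ x, z ↦ −z. Then the fixed subalgebra {f ∈ ℂ[x,y,z] : σ_ρ(f) = f} equals the ℂ-subalgebra generated by xⁿ+yⁿ, xⁿ−yⁿ, xy and z; moreover σ_ε fixes xⁿ+yⁿ and xy, while σ_ε(xⁿ−yⁿ) = −(xⁿ−yⁿ) and σ_ε(z) = −z. -/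
/-!
The substitution `x ↦ ζx, y ↦ ζ⁻¹y, z ↦ z` scales the monomial `xᵃ yᵇ zᶜ` by `ζ^(a - b)`, so a
polynomial is fixed iff each of its monomials has `n ∣ a - b`. Such a monomial is
`(xy)^min(a,b) · (xⁿ or yⁿ)^k · zᶜ`, and `xⁿ`, `yⁿ` are half the sum and difference of
`xⁿ + yⁿ` and `xⁿ - yⁿ`. Conversely the generators are visibly fixed.
-/

open MvPolynomial

theorem IsPrimitiveRoot.pow_mul_inv_pow_eq_one_iff {K : Type*} [Field K] {ζ : K} {n : ℕ}
    (hζ : IsPrimitiveRoot ζ n) (hn : n ≠ 0) (a b : ℕ) :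
    ζ ^ a * ζ⁻¹ ^ b = 1 ↔ (n : ℤ) ∣ (a : ℤ) - b := by
  rw [← hζ.zpow_eq_one_iff_dvd, zpow_sub₀ (hζ.ne_zero hn), zpow_natCast, zpow_natCast,
    div_eq_mul_inv, inv_pow]

theorem Submonoid.pow_mul_pow_mem_of_dvd_sub {M : Type*} [CommMonoid M] (S : Submonoid M)
    {u v : M} {n : ℕ} (huv : u * v ∈ S) (hu : u ^ n ∈ S) (hv : v ^ n ∈ S) {a b : ℕ}
    (hab : (n : ℤ) ∣ (a : ℤ) - b) : u ^ a * v ^ b ∈ S := by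
  wlog hle : a ≤ b generalizing u v a b
  · rw [mul_comm]
    exact this (mul_comm u v ▸ huv) hv hu (by rwa [← dvd_neg, neg_sub]) (by omega)
  obtain ⟨k, hk⟩ : n ∣ b - a := by
    rw [← Int.natCast_dvd_natCast, Nat.cast_sub hle, ← dvd_neg, neg_sub]; exact hab
  have hb : b = a + n * k := by omega
  rw [hb, pow_add, pow_mul, ← mul_assoc, ← mul_pow]
  exact S.mul_mem (S.pow_mem huv a) (S.pow_mem hv k)

theorem Subalgebra.mem_of_add_mem_of_sub_mem {K A : Type*} [Field K] [NeZero (2 : K)] [Ring A]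
    [Algebra K A] (S : Subalgebra K A) {a b : A} (hadd : a + b ∈ S) (hsub : a - b ∈ S) : a ∈ S := by
  have : a = (2 : K)⁻¹ • ((a + b) + (a - b)) := by
    rw [add_add_sub_cancel, ← two_smul K a, smul_smul, inv_mul_cancel₀ two_ne_zero, one_smul]
  rw [this]
  exact S.smul_mem (S.add_mem hadd hsub) _

namespace MvPolynomial

variable {R σ : Type*} [CommSemiring R]

theorem aeval_C_mul_X_monomial (w : σ → R) (d : σ →₀ ℕ) (c : R) :
    aeval (fun i => C (w i) * X i) (monomial d c) = monomial d ((d.prod fun i k => w i ^ k) * c) := by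
  rw [aeval_monomial, monomial_eq, algebraMap_eq, C_mul, Finsupp.prod, Finsupp.prod,
    Finsupp.prod, map_prod]
  simp only [mul_pow, Finset.prod_mul_distrib, C_pow]
  ring

theorem coeff_aeval_C_mul_X (w : σ → R) (d : σ →₀ ℕ) (p : MvPolynomial σ R) :
    coeff d (aeval (fun i => C (w i) * X i) p) = (d.prod fun i k => w i ^ k) * coeff d p := by
  induction p using induction_on' with
  | monomial u c =>
    classical
    rw [aeval_C_mul_X_monomial, coeff_monomial, coeff_monomial]
    split_ifs with h <;> simp [h]
  | add p q hp hq => rw [map_add, coeff_add, coeff_add, hp, hq, mul_add]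

theorem aeval_C_mul_X_eq_self_iff {K : Type*} [Field K] (w : σ → K) (p : MvPolynomial σ K) :
    aeval (fun i => C (w i) * X i) p = p ↔ ∀ d ∈ p.support, (d.prod fun i k => w i ^ k) = 1 := by
  simp only [MvPolynomial.ext_iff, coeff_aeval_C_mul_X, mem_support_iff]
  refine forall_congr' fun d => ?_
  rw [mul_left_eq_self₀]
  tauto

theorem monomial_mem_adjoin_of_dvd_sub {K : Type*} [Field K] [NeZero (2 : K)] {n : ℕ}
    (d : Fin 3 →₀ ℕ) (c : K) (hd : (n : ℤ) ∣ (d 0 : ℤ) - d 1) :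
    monomial d c ∈ Algebra.adjoin K
      ({X 0 ^ n + X 1 ^ n, X 0 ^ n - X 1 ^ n, X 0 * X 1, X 2} : Set (MvPolynomial (Fin 3) K)) := by
  set S := Algebra.adjoin K
    ({X 0 ^ n + X 1 ^ n, X 0 ^ n - X 1 ^ n, X 0 * X 1, X 2} : Set (MvPolynomial (Fin 3) K))
  have hadd : X 0 ^ n + X 1 ^ n ∈ S := Algebra.subset_adjoin (by simp)
  have hsub : X 0 ^ n - X 1 ^ n ∈ S := Algebra.subset_adjoin (by simp)
  have hxy : X 0 * X 1 ∈ S := Algebra.subset_adjoin (by simp)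
  have hz : X 2 ∈ S := Algebra.subset_adjoin (by simp)
  have hx : X 0 ^ n ∈ S := S.mem_of_add_mem_of_sub_mem hadd hsub
  have hy : X 1 ^ n ∈ S := by simpa using S.sub_mem hadd hx
  have hxy_mono : X 0 ^ d 0 * X 1 ^ d 1 ∈ S :=
    S.toSubmonoid.pow_mul_pow_mem_of_dvd_sub hxy hx hy hd
  rw [monomial_eq, Finsupp.prod_pow, Fin.prod_univ_three, ← mul_assoc]
  exact S.mul_mem (S.mul_mem (S.algebraMap_mem c) hxy_mono) (S.pow_mem hz _)

end MvPolynomial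

theorem stmt0_general (n : ℕ) (hn : 3 ≤ n) (ζ : ℂ) (hζ : IsPrimitiveRoot ζ n) :
    (∀ f : MvPolynomial (Fin 3) ℂ,
      aeval ![(C ζ * X 0 : MvPolynomial (Fin 3) ℂ), C ζ⁻¹ * X 1, X 2] f = f ↔
        f ∈ Algebra.adjoin ℂ
          ({X 0 ^ n + X 1 ^ n, X 0 ^ n - X 1 ^ n, X 0 * X 1, X 2} :
            Set (MvPolynomial (Fin 3) ℂ)))
    ∧ aeval ![(X 1 : MvPolynomial (Fin 3) ℂ), X 0, -X 2] ((X 0 ^ n + X 1 ^ n : MvPolynomial (Fin 3) ℂ))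
        = X 0 ^ n + X 1 ^ n
    ∧ aeval ![(X 1 : MvPolynomial (Fin 3) ℂ), X 0, -X 2] ((X 0 * X 1 : MvPolynomial (Fin 3) ℂ)) = X 0 * X 1
    ∧ aeval ![(X 1 : MvPolynomial (Fin 3) ℂ), X 0, -X 2] ((X 0 ^ n - X 1 ^ n : MvPolynomial (Fin 3) ℂ))
        = -(X 0 ^ n - X 1 ^ n)
    ∧ aeval ![(X 1 : MvPolynomial (Fin 3) ℂ), X 0, -X 2] (X 2 : MvPolynomial (Fin 3) ℂ)
        = -X 2 := by
  have hn0 : n ≠ 0 := by omega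
  have hρ : ![(C ζ * X 0 : MvPolynomial (Fin 3) ℂ), C ζ⁻¹ * X 1, X 2]
      = fun i => C (![ζ, ζ⁻¹, 1] i) * X i := by
    funext i; fin_cases i <;> simp
  have hweight (d : Fin 3 →₀ ℕ) : (d.prod fun i k => ![ζ, ζ⁻¹, 1] i ^ k) = ζ ^ d 0 * ζ⁻¹ ^ d 1 := by
    simp [Finsupp.prod_pow, Fin.prod_univ_three]
  refine ⟨fun f => ⟨fun hf => ?_, fun hf => ?_⟩, ?_, ?_, ?_, ?_⟩
  · rw [hρ, aeval_C_mul_X_eq_self_iff] at hf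
    rw [f.as_sum]
    refine Subalgebra.sum_mem _ fun d hd => monomial_mem_adjoin_of_dvd_sub d _ ?_
    rw [← hζ.pow_mul_inv_pow_eq_one_iff hn0, ← hweight]
    exact hf d hd
  · change f ∈ AlgHom.equalizer (aeval _) (AlgHom.id ℂ _)
    refine Algebra.adjoin_le ?_ hf
    have hζn : ζ ^ n = 1 := hζ.pow_eq_one
    have hζζ : C ζ * C ζ⁻¹ = (1 : MvPolynomial (Fin 3) ℂ) := by
      rw [← C_mul, mul_inv_cancel₀ (hζ.ne_zero hn0), C_1]
    rintro p (rfl | rfl | rfl | rfl)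
    · simp [mul_pow, ← C_pow, hζn]
    · simp [mul_pow, ← C_pow, hζn]
    · simp only [SetLike.mem_coe, AlgHom.mem_equalizer, AlgHom.id_apply, map_mul, aeval_X,
        Matrix.cons_val_zero, Matrix.cons_val_one]
      linear_combination X 0 * X 1 * hζζ
    · simp
  · simp; ring
  · simp; ring
  · simp
  · simp

/-- For odd `n ≥ 3` and a primitive `n`-th root of unity `ζ`,
the fixed subalgebra of the substitution `x ↦ ζx, y ↦ ζ⁻¹y, z ↦ z` on `ℂ[x,y,z]`
is generated by `xⁿ+yⁿ, xⁿ−yⁿ, xy, z`; moreover the substitution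
`x ↦ y, y ↦ x, z ↦ −z` fixes `xⁿ+yⁿ` and `xy` and negates `xⁿ−yⁿ` and `z`. -/
theorem stmt0 (n : ℕ) (hn : 3 ≤ n) (hodd : Odd n) (ζ : ℂ) (hζ : IsPrimitiveRoot ζ n) :
    (∀ f : MvPolynomial (Fin 3) ℂ,
      aeval ![(C ζ * X 0 : MvPolynomial (Fin 3) ℂ), C ζ⁻¹ * X 1, X 2] f = f ↔
        f ∈ Algebra.adjoin ℂ
          ({X 0 ^ n + X 1 ^ n, X 0 ^ n - X 1 ^ n, X 0 * X 1, X 2} :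
            Set (MvPolynomial (Fin 3) ℂ)))
    ∧ aeval ![(X 1 : MvPolynomial (Fin 3) ℂ), X 0, -X 2] ((X 0 ^ n + X 1 ^ n : MvPolynomial (Fin 3) ℂ))
        = X 0 ^ n + X 1 ^ n
    ∧ aeval ![(X 1 : MvPolynomial (Fin 3) ℂ), X 0, -X 2] ((X 0 * X 1 : MvPolynomial (Fin 3) ℂ)) = X 0 * X 1
    ∧ aeval ![(X 1 : MvPolynomial (Fin 3) ℂ), X 0, -X 2] ((X 0 ^ n - X 1 ^ n : MvPolynomial (Fin 3) ℂ))
        = -(X 0 ^ n - X 1 ^ n)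
    ∧ aeval ![(X 1 : MvPolynomial (Fin 3) ℂ), X 0, -X 2] (X 2 : MvPolynomial (Fin 3) ℂ)
        = -X 2 :=
  stmt0_general n hn ζ hζ
end

section
/- Let n = 2k+1 ≥ 3 be odd. Let S be the localization of the polynomial ring ℂ[x,y,z,t_ε,t₁,…,t_k] at the multiplicative set generated by t_ε, t₁, …, t_k (the Laurent polynomial ring in the t-variables over ℂ[x,y,z]). Let κ : ℂ[Z₁,Z₂,Z₃,Z₄,T_ε,T₁,…,T_k] → S be the ℂ-algebra homomorphism with Z₁ ↦ (xⁿ+yⁿ)·∏_{i=1}^{k} t_i^{in/gcd(n,i)}, Z₂ ↦ (xⁿ−yⁿ)·t_ε·∏_{i=1}^{k} t_i^{in/gcd(n,i)}, Z₃ ↦ xy·∏_{i=1}^{k} t_i^{n/gcd(n,i)}, Z₄ ↦ z·t_ε, T_ε ↦ t_ε^{−2}, and T_i ↦ t_i^{−n/gcd(n,i)} for i = 1,…,k. Then the kernel of κ is the principal ideal generated by the trinomial Z₁² − Z₂²T_ε − 4Z₃ⁿ·∏_{i=1}^{k} T_i^{n−2i}. -/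
open MvPolynomial

noncomputable section

/-- `ℂ[x,y,z,t_ε,t₁,…,t_k]`: variables `Sum.inl 0, Sum.inl 1, Sum.inl 2` are `x,y,z`,
`Sum.inl 3` is `t_ε`, and `Sum.inr i` is `t_{i+1}`. -/
abbrev R2 (k : ℕ) : Type := MvPolynomial (Fin 4 ⊕ Fin k) ℂ

/-- The multiplicative set generated by `t_ε, t₁, …, t_k`. -/
def M2 (k : ℕ) : Submonoid (R2 k) :=
  Submonoid.closure
    (insert (X (Sum.inl 3)) (Set.range fun i : Fin k => X (Sum.inr i)))

/-- The localization `S` of `ℂ[x,y,z,t_ε,t₁,…,t_k]` at the multiplicative set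
generated by `t_ε, t₁, …, t_k`. -/
abbrev S2 (k : ℕ) : Type := Localization (M2 k)

/-- The element `t_ε^{-m} ∈ S`. -/
def tEpsInv2 (k m : ℕ) : S2 k :=
  Localization.mk 1
    ⟨X (Sum.inl 3) ^ m, pow_mem (Submonoid.subset_closure (Set.mem_insert _ _)) m⟩

/-- The element `t_{i+1}^{-m} ∈ S`. -/
def tInv2 (k : ℕ) (i : Fin k) (m : ℕ) : S2 k :=
  Localization.mk 1
    ⟨X (Sum.inr i) ^ m,
      pow_mem
        (Submonoid.subset_closure (Set.mem_insert_iff.mpr (Or.inr (Set.mem_range_self i))))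
        m⟩

/-- The ℂ-algebra homomorphism `κ : ℂ[Z₁,Z₂,Z₃,Z₄,T_ε,T₁,…,T_k] → S` of STATEMENT 2
(variables `Sum.inl 0, …, Sum.inl 3` are `Z₁,…,Z₄`, `Sum.inl 4` is `T_ε`, and
`Sum.inr i` is `T_{i+1}`). -/
def kappa2 (k n : ℕ) : MvPolynomial (Fin 5 ⊕ Fin k) ℂ →ₐ[ℂ] S2 k :=
  aeval
    (Sum.elim
      ![algebraMap (R2 k) (S2 k)
          ((X (Sum.inl 0) ^ n + X (Sum.inl 1) ^ n) *
            ∏ i : Fin k, X (Sum.inr i) ^ ((((i : ℕ) + 1) * n) / Nat.gcd n ((i : ℕ) + 1))),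
        algebraMap (R2 k) (S2 k)
          ((X (Sum.inl 0) ^ n - X (Sum.inl 1) ^ n) * X (Sum.inl 3) *
            ∏ i : Fin k, X (Sum.inr i) ^ ((((i : ℕ) + 1) * n) / Nat.gcd n ((i : ℕ) + 1))),
        algebraMap (R2 k) (S2 k)
          (X (Sum.inl 0) * X (Sum.inl 1) *
            ∏ i : Fin k, X (Sum.inr i) ^ (n / Nat.gcd n ((i : ℕ) + 1))),
        algebraMap (R2 k) (S2 k) (X (Sum.inl 2) * X (Sum.inl 3)),
        tEpsInv2 k 2]
      (fun i : Fin k => tInv2 k i (n / Nat.gcd n ((i : ℕ) + 1))))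

/-
Put `A = ℂ[Z₂, Z₃, Z₄, T_ε, T₁, …, T_k]` and `s = κ(Z₁)`, so that `κ` is the evaluation at `s`
of polynomials in `Z₁` over `A`. In `S` one has `s² = κ(G)` for `G = Z₂²T_ε + 4Z₃ⁿ∏ T_i^{n-2i}`,
so the trinomial `Z₁² - G` lies in the kernel, and after division by this monic polynomial it
remains to see that `κ(a) + κ(b) s = 0` forces `a = b = 0`.

First, `κ` is injective on `A`: in an algebraic closure of `Frac A` one can choose values of
`x, y, z, t_ε, t_i` at which the images of `Z₂, …, T_k` are the variables `Z₂, …, T_k` themselves,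
and evaluation at this point is a left inverse of `κ|_A`. Then `κ(a) = -κ(b) s` gives
`a² = b² G` in `A`; since `A` is integrally closed and `G`, being of degree one in `T_ε`, is not a
square, this forces `a = b = 0`.
-/

section QuadraticExtension

variable {R B : Type*} [CommRing R] [CommRing B]

theorem ker_eval₂RingHom_eq_span_X_sq_sub_C (f : R →+* B) {s : B} {g : R}
    (hs : s ^ 2 = f g) (hind : ∀ a b : R, f a + f b * s = 0 → a = 0 ∧ b = 0) :
    RingHom.ker (Polynomial.eval₂RingHom f s) =
      Ideal.span {Polynomial.X ^ 2 - Polynomial.C g} := by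
  nontriviality R
  set m : Polynomial R := Polynomial.X ^ 2 - Polynomial.C g
  have hmonic : m.Monic := Polynomial.monic_X_pow_sub_C g two_ne_zero
  have hroot : m.eval₂ f s = 0 := by simp [m, hs]
  refine le_antisymm (fun p hp => ?_) ?_
  · rw [RingHom.mem_ker, Polynomial.coe_eval₂RingHom] at hp
    set r := p %ₘ m
    have hr : r.eval₂ f s = 0 := by
      rw [show r = _ from Polynomial.modByMonic_eq_sub_mul_div p m, Polynomial.eval₂_sub,
        Polynomial.eval₂_mul, hp, hroot, zero_mul, sub_zero]
    have hdeg : r.degree ≤ 1 := by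
      have hm : m.degree ≤ 2 := by rw [Polynomial.degree_X_pow_sub_C two_pos]; rfl
      exact Order.le_of_lt_succ ((Polynomial.degree_modByMonic_lt p hmonic).trans_le hm)
    rw [Polynomial.eq_X_add_C_of_degree_le_one hdeg] at hr
    obtain ⟨h0, h1⟩ := hind (r.coeff 0) (r.coeff 1) (by simpa [add_comm] using hr)
    rw [Ideal.mem_span_singleton, ← Polynomial.modByMonic_eq_zero_iff_dvd hmonic]
    change r = 0
    rw [Polynomial.eq_X_add_C_of_degree_le_one hdeg, h0, h1]
    simp
  · rw [Ideal.span_le, Set.singleton_subset_iff]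
    exact hroot

theorem eq_zero_and_eq_zero_of_add_mul_eq_zero [IsDomain R] [IsIntegrallyClosed R]
    {f : R →+* B} (hf : Function.Injective f) {s : B} {g : R} (hs : s ^ 2 = f g)
    (hg : ¬ IsSquare g) {a b : R} (h : f a + f b * s = 0) : a = 0 ∧ b = 0 := by
  have hsq : a ^ 2 = b ^ 2 * g := hf <| by
    rw [map_pow, map_mul, map_pow, ← hs, eq_neg_of_add_eq_zero_left h]
    ring
  by_cases hb : b = 0
  · simp_all
  obtain ⟨c, rfl⟩ := (IsIntegrallyClosed.pow_dvd_pow_iff two_ne_zero).1 ⟨g, hsq⟩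
  refine absurd ⟨c, ?_⟩ hg
  exact (mul_left_cancel₀ (pow_ne_zero 2 hb) (by rw [← hsq]; ring)).symm

end QuadraticExtension

theorem algHom_eq_eval₂RingHom_comp {R τ σ B : Type*} [CommRing R] [CommRing B] [Algebra R B]
    (e : τ ≃ Option σ) (f : MvPolynomial τ R →ₐ[R] B) :
    (f : MvPolynomial τ R →+* B) =
      (Polynomial.eval₂RingHom (f.comp (rename (e.symm ∘ some)) : MvPolynomial σ R →+* B)
          (f (X (e.symm none)))).comp
        ((renameEquiv R e).trans (optionEquivLeft R σ) : MvPolynomial τ R →+* _) := by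
  refine MvPolynomial.ringHom_ext (fun r => by simp) (fun j => ?_)
  rcases hj : e j with _ | j' <;> simp [hj, e.symm_apply_eq.2 hj.symm]

theorem Localization.mk_one_mul_algebraMap {R : Type*} [CommRing R] {M : Submonoid R} (m : M) :
    Localization.mk 1 m * algebraMap R (Localization M) m = 1 := by
  rw [Localization.mk_eq_mk', IsLocalization.mk'_spec, map_one]

def sumEquivOption (k : ℕ) : Fin 5 ⊕ Fin k ≃ Option (Fin 4 ⊕ Fin k) where
  toFun := Sum.elim
    ![none, some (Sum.inl 0), some (Sum.inl 1), some (Sum.inl 2), some (Sum.inl 3)]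
    (some ∘ Sum.inr)
  invFun o := o.elim (Sum.inl 0) (Sum.elim (Sum.inl ∘ Fin.succ) Sum.inr)
  left_inv := by rintro (i | i) <;> [fin_cases i; skip] <;> rfl
  right_inv := by rintro (_ | (j | i)) <;> [rfl; fin_cases j; rfl] <;> rfl

def optionPolyEquiv (k : ℕ) : MvPolynomial (Fin 5 ⊕ Fin k) ℂ ≃ₐ[ℂ] Polynomial (R2 k) :=
  (renameEquiv ℂ (sumEquivOption k)).trans (optionEquivLeft ℂ (Fin 4 ⊕ Fin k))

def kappaTail (k n : ℕ) : R2 k →ₐ[ℂ] S2 k :=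
  (kappa2 k n).comp (rename ((sumEquivOption k).symm ∘ some))

def trinomialTail (k n : ℕ) : R2 k :=
  X (Sum.inl 0) ^ 2 * X (Sum.inl 3) +
    4 * X (Sum.inl 1) ^ n * ∏ i : Fin k, X (Sum.inr i) ^ (n - 2 * ((i : ℕ) + 1))

theorem optionPolyEquiv_trinomial (k n : ℕ) :
    optionPolyEquiv k
        (X (Sum.inl 0) ^ 2 - X (Sum.inl 1) ^ 2 * X (Sum.inl 4)
          - 4 * X (Sum.inl 2) ^ n * ∏ i : Fin k, X (Sum.inr i) ^ (n - 2 * ((i : ℕ) + 1))) =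
      Polynomial.X ^ 2 - Polynomial.C (trinomialTail k n) := by
  simp [optionPolyEquiv, sumEquivOption, trinomialTail, map_ofNat]
  ring

section KappaTail

variable {k n : ℕ}

theorem kappaTail_X_inl_zero : kappaTail k n (X (Sum.inl 0)) = algebraMap (R2 k) (S2 k)
    ((X (Sum.inl 0) ^ n - X (Sum.inl 1) ^ n) * X (Sum.inl 3) *
      ∏ i : Fin k, X (Sum.inr i) ^ ((((i : ℕ) + 1) * n) / Nat.gcd n ((i : ℕ) + 1))) := by
  simp [kappaTail, kappa2, sumEquivOption]

theorem kappaTail_X_inl_one : kappaTail k n (X (Sum.inl 1)) = algebraMap (R2 k) (S2 k)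
    (X (Sum.inl 0) * X (Sum.inl 1) *
      ∏ i : Fin k, X (Sum.inr i) ^ (n / Nat.gcd n ((i : ℕ) + 1))) := by
  simp [kappaTail, kappa2, sumEquivOption]

theorem kappaTail_X_inl_two :
    kappaTail k n (X (Sum.inl 2)) = algebraMap (R2 k) (S2 k) (X (Sum.inl 2) * X (Sum.inl 3)) := by
  simp [kappaTail, kappa2, sumEquivOption]

theorem kappaTail_X_inl_three : kappaTail k n (X (Sum.inl 3)) = tEpsInv2 k 2 := by
  simp [kappaTail, kappa2, sumEquivOption]

theorem kappaTail_X_inr (i : Fin k) :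
    kappaTail k n (X (Sum.inr i)) = tInv2 k i (n / Nat.gcd n ((i : ℕ) + 1)) := by
  simp [kappaTail, kappa2, sumEquivOption]

theorem tEpsInv2_mul_algebraMap (m : ℕ) :
    tEpsInv2 k m * algebraMap (R2 k) (S2 k) (X (Sum.inl 3) ^ m) = 1 :=
  Localization.mk_one_mul_algebraMap _

theorem tInv2_mul_algebraMap (i : Fin k) (m : ℕ) :
    tInv2 k i m * algebraMap (R2 k) (S2 k) (X (Sum.inr i) ^ m) = 1 :=
  Localization.mk_one_mul_algebraMap _

theorem kappa2_X_inl_zero_sq (hn : 2 * k ≤ n) :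
    kappa2 k n (X (Sum.inl 0)) ^ 2 = kappaTail k n (trinomialTail k n) := by
  set a := algebraMap (R2 k) (S2 k)
  set d : Fin k → ℕ := fun i => n / Nat.gcd n ((i : ℕ) + 1)
  set P := ∏ i, a (X (Sum.inr i)) ^ ((((i : ℕ) + 1) * n) / Nat.gcd n ((i : ℕ) + 1))
  have hε : tEpsInv2 k 2 * a (X (Sum.inl 3)) ^ 2 = 1 := by
    rw [← map_pow]
    exact tEpsInv2_mul_algebraMap 2
  have hprod : (∏ i, a (X (Sum.inr i)) ^ d i) ^ n * ∏ i, tInv2 k i (d i) ^ (n - 2 * ((i : ℕ) + 1))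
      = P ^ 2 := by
    rw [← Finset.prod_pow, ← Finset.prod_pow, ← Finset.prod_mul_distrib]
    refine Finset.prod_congr rfl fun i _ => ?_
    have hle : 2 * ((i : ℕ) + 1) ≤ n := by have := i.isLt; omega
    have hinv : tInv2 k i (d i) * a (X (Sum.inr i)) ^ d i = 1 := by
      rw [← map_pow]
      exact tInv2_mul_algebraMap i (d i)
    rw [← pow_sub_mul_pow _ hle, mul_right_comm, ← mul_pow, mul_comm _ (tInv2 k i (d i)), hinv,
      one_pow, one_mul, Nat.mul_div_assoc _ (Nat.gcd_dvd_left _ _)]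
    ring
  simp only [trinomialTail, kappa2, aeval_X, Sum.elim_inl, Matrix.cons_val_zero, map_add, map_mul,
    map_pow, map_ofNat, map_prod, map_sub, kappaTail_X_inl_zero, kappaTail_X_inl_one,
    kappaTail_X_inl_three, kappaTail_X_inr]
  set x := a (X (Sum.inl 0))
  set y := a (X (Sum.inl 1))
  -- `(xⁿ + yⁿ)² = (xⁿ - yⁿ)² + 4xⁿyⁿ`, once the powers of the `t`'s cancel
  linear_combination (-(x ^ n - y ^ n) ^ 2 * P ^ 2) * hε - 4 * x ^ n * y ^ n * hprod

end KappaTail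

theorem IsAlgClosed.exists_pow_sub_pow_eq_and_mul_eq {L : Type*} [Field L] [IsAlgClosed L]
    {n : ℕ} (hn : n ≠ 0) (a : L) {c : L} (hc : c ≠ 0) :
    ∃ ξ η : L, ξ ^ n - η ^ n = a ∧ ξ * η = c := by
  set p := Polynomial.X ^ 2 - Polynomial.C a * Polynomial.X - Polynomial.C (c ^ n)
  have hdeg : p.degree = 2 := by
    simp only [p]
    compute_degree!
  obtain ⟨u, hu⟩ := IsAlgClosed.exists_root p (by rw [hdeg]; decide)
  have hu : u ^ 2 - a * u - c ^ n = 0 := by simpa [p] using hu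
  have hu0 : u ≠ 0 := by
    rintro rfl
    exact pow_ne_zero n hc (by linear_combination -hu)
  obtain ⟨ξ, hξ⟩ := IsAlgClosed.exists_pow_nat_eq u (Nat.pos_of_ne_zero hn)
  have hξ0 : ξ ≠ 0 := by rintro rfl; exact hu0 (by rw [← hξ, zero_pow hn])
  refine ⟨ξ, c / ξ, ?_, by field_simp⟩
  rw [div_pow, hξ]
  field_simp
  linear_combination hu

section Retraction

variable {k : ℕ} {L : Type*} [Field L] [Algebra ℂ L]

theorem M2_le_comap_isUnit {v : Fin 4 ⊕ Fin k → L} (hε : v (Sum.inl 3) ≠ 0)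
    (ht : ∀ i, v (Sum.inr i) ≠ 0) :
    M2 k ≤ (IsUnit.submonoid L).comap ((aeval v : R2 k →ₐ[ℂ] L) : R2 k →* L) := by
  refine Submonoid.closure_le.2 ?_
  rintro _ (rfl | ⟨i, rfl⟩) <;> simp [IsUnit.mem_submonoid_iff, hε, ht]

variable (k) in
def evalLift (v : Fin 4 ⊕ Fin k → L) (hε : v (Sum.inl 3) ≠ 0) (ht : ∀ i, v (Sum.inr i) ≠ 0) :
    S2 k →ₐ[ℂ] L :=
  IsLocalization.liftAlgHom (M := M2 k) (f := aeval v) fun m => M2_le_comap_isUnit hε ht m.2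

variable {v : Fin 4 ⊕ Fin k → L} {hε : v (Sum.inl 3) ≠ 0} {ht : ∀ i, v (Sum.inr i) ≠ 0}

theorem evalLift_algebraMap (r : R2 k) :
    evalLift k v hε ht (algebraMap (R2 k) (S2 k) r) = aeval v r :=
  IsLocalization.lift_eq _ _

theorem evalLift_tEpsInv2 (m : ℕ) :
    evalLift k v hε ht (tEpsInv2 k m) = (v (Sum.inl 3) ^ m)⁻¹ := by
  refine eq_inv_of_mul_eq_one_left ?_
  rw [← map_one (evalLift k v hε ht), ← tEpsInv2_mul_algebraMap m, map_mul, evalLift_algebraMap]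
  simp

theorem evalLift_tInv2 (i : Fin k) (m : ℕ) :
    evalLift k v hε ht (tInv2 k i m) = (v (Sum.inr i) ^ m)⁻¹ := by
  refine eq_inv_of_mul_eq_one_left ?_
  rw [← map_one (evalLift k v hε ht), ← tInv2_mul_algebraMap i m, map_mul, evalLift_algebraMap]
  simp

end Retraction

section Points

variable (k n : ℕ) {L : Type*} [Field L]

def kappaTailPoint (v : Fin 4 ⊕ Fin k → L) : Fin 4 ⊕ Fin k → L :=
  Sum.elim
    ![(v (Sum.inl 0) ^ n - v (Sum.inl 1) ^ n) * v (Sum.inl 3) *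
        ∏ i : Fin k, v (Sum.inr i) ^ ((((i : ℕ) + 1) * n) / Nat.gcd n ((i : ℕ) + 1)),
      v (Sum.inl 0) * v (Sum.inl 1) * ∏ i : Fin k, v (Sum.inr i) ^ (n / Nat.gcd n ((i : ℕ) + 1)),
      v (Sum.inl 2) * v (Sum.inl 3),
      (v (Sum.inl 3) ^ 2)⁻¹]
    (fun i => (v (Sum.inr i) ^ (n / Nat.gcd n ((i : ℕ) + 1)))⁻¹)

variable {k n}

theorem evalLift_kappaTail_X [Algebra ℂ L] {v : Fin 4 ⊕ Fin k → L} (hε : v (Sum.inl 3) ≠ 0)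
    (ht : ∀ i, v (Sum.inr i) ≠ 0) (j : Fin 4 ⊕ Fin k) :
    evalLift k v hε ht (kappaTail k n (X j)) = kappaTailPoint k n v j := by
  rcases j with j | i
  · fin_cases j
    · simp [kappaTail_X_inl_zero, evalLift_algebraMap, kappaTailPoint]
    · simp [kappaTail_X_inl_one, evalLift_algebraMap, kappaTailPoint]
    · simp [kappaTail_X_inl_two, evalLift_algebraMap, kappaTailPoint]
    · simp [kappaTail_X_inl_three, evalLift_tEpsInv2, kappaTailPoint]
  · simp [kappaTail_X_inr, evalLift_tInv2, kappaTailPoint]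

theorem exists_kappaTailPoint_eq [IsAlgClosed L] (hn : n ≠ 0) (w : Fin 4 ⊕ Fin k → L)
    (h₁ : w (Sum.inl 1) ≠ 0) (hε : w (Sum.inl 3) ≠ 0) (ht : ∀ i, w (Sum.inr i) ≠ 0) :
    ∃ v : Fin 4 ⊕ Fin k → L,
      v (Sum.inl 3) ≠ 0 ∧ (∀ i, v (Sum.inr i) ≠ 0) ∧ kappaTailPoint k n v = w := by
  obtain ⟨τε, hτε⟩ := IsAlgClosed.exists_pow_nat_eq (w (Sum.inl 3))⁻¹ two_pos
  have hd : ∀ i : Fin k, 0 < n / Nat.gcd n ((i : ℕ) + 1) := fun i =>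
    Nat.div_pos (Nat.gcd_le_left _ (Nat.pos_of_ne_zero hn))
      (Nat.gcd_pos_of_pos_left _ (Nat.pos_of_ne_zero hn))
  choose τ hτ using fun i => IsAlgClosed.exists_pow_nat_eq (w (Sum.inr i))⁻¹ (hd i)
  have hτε0 : τε ≠ 0 := by rintro rfl; simp_all
  have hτ0 : ∀ i, τ i ≠ 0 := fun i h =>
    ht i (inv_eq_zero.1 (by rw [← hτ i, h, zero_pow (hd i).ne']))
  set P := ∏ i : Fin k, τ i ^ ((((i : ℕ) + 1) * n) / Nat.gcd n ((i : ℕ) + 1))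
  set Q := ∏ i : Fin k, τ i ^ (n / Nat.gcd n ((i : ℕ) + 1))
  have hP : P ≠ 0 := Finset.prod_ne_zero_iff.2 fun i _ => pow_ne_zero _ (hτ0 i)
  have hQ : Q ≠ 0 := Finset.prod_ne_zero_iff.2 fun i _ => pow_ne_zero _ (hτ0 i)
  obtain ⟨ξ, η, hsub, hmul⟩ := IsAlgClosed.exists_pow_sub_pow_eq_and_mul_eq hn
    (w (Sum.inl 0) / (τε * P)) (div_ne_zero h₁ hQ)
  refine ⟨Sum.elim ![ξ, η, w (Sum.inl 2) / τε, τε] τ, hτε0, hτ0, funext ?_⟩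
  rintro (j | i)
  · fin_cases j
    · change (ξ ^ n - η ^ n) * τε * P = w (Sum.inl 0)
      rw [hsub]
      field_simp
    · change ξ * η * Q = w (Sum.inl 1)
      rw [hmul]
      field_simp
    · change w (Sum.inl 2) / τε * τε = w (Sum.inl 2)
      field_simp
    · change (τε ^ 2)⁻¹ = w (Sum.inl 3)
      rw [hτε, inv_inv]
  · change (τ i ^ _)⁻¹ = _
    rw [hτ, inv_inv]

end Points

theorem kappaTail_injective {k n : ℕ} (hn : n ≠ 0) :
    Function.Injective (kappaTail k n) := by
  let L := AlgebraicClosure (FractionRing (R2 k))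
  have hinj : Function.Injective (algebraMap (R2 k) L) := by
    rw [IsScalarTower.algebraMap_eq (R2 k) (FractionRing (R2 k)) L]
    exact (algebraMap (FractionRing (R2 k)) L).injective.comp (IsFractionRing.injective _ _)
  have hX : ∀ j, algebraMap (R2 k) L (X j) ≠ 0 := fun j =>
    (map_ne_zero_iff _ hinj).2 (X_ne_zero j)
  obtain ⟨v, hvε, hvt, hv⟩ :=
    exists_kappaTailPoint_eq hn (fun j => algebraMap (R2 k) L (X j)) (hX _) (hX _) (fun i => hX _)
  have hcomp : (evalLift k v hvε hvt).comp (kappaTail k n) = IsScalarTower.toAlgHom ℂ (R2 k) L :=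
    algHom_ext fun j => by simp [evalLift_kappaTail_X, hv]
  refine Function.Injective.of_comp (f := evalLift k v hvε hvt) ?_
  rw [← AlgHom.coe_comp, hcomp]
  exact hinj

theorem not_isSquare_trinomialTail {k n : ℕ} (hn : n ≠ 0) : ¬ IsSquare (trinomialTail k n) := by
  rintro ⟨b, hb⟩
  have h := congrArg (aeval (Sum.elim ![1, 0, 0, Polynomial.X] 1 : _ → Polynomial ℂ)) hb
  simp [trinomialTail, zero_pow hn, ← sq] at h
  have := congrArg Polynomial.natDegree h
  rw [Polynomial.natDegree_pow, Polynomial.natDegree_X] at this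
  omega

theorem kappa2_eq_eval₂RingHom_comp {k n : ℕ} :
    (kappa2 k n : MvPolynomial (Fin 5 ⊕ Fin k) ℂ →+* S2 k) =
      (Polynomial.eval₂RingHom (kappaTail k n : R2 k →+* S2 k) (kappa2 k n (X (Sum.inl 0)))).comp
        ((optionPolyEquiv k : MvPolynomial (Fin 5 ⊕ Fin k) ℂ ≃+* Polynomial (R2 k)) : _ →+* _) :=
  algHom_eq_eval₂RingHom_comp (sumEquivOption k) (kappa2 k n)

theorem stmt2_general (k n : ℕ) (hn : n = 2 * k + 1) :
    RingHom.ker (kappa2 k n) =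
      Ideal.span
        {(X (Sum.inl 0) ^ 2 - X (Sum.inl 1) ^ 2 * X (Sum.inl 4)
            - 4 * X (Sum.inl 2) ^ n *
              ∏ i : Fin k, X (Sum.inr i) ^ (n - 2 * ((i : ℕ) + 1)) :
          MvPolynomial (Fin 5 ⊕ Fin k) ℂ)} := by
  have hsq := kappa2_X_inl_zero_sq (k := k) (n := n) (by omega)
  have hind : ∀ a b, kappaTail k n a + kappaTail k n b * kappa2 k n (X (Sum.inl 0)) = 0 →
      a = 0 ∧ b = 0 := fun a b =>
    eq_zero_and_eq_zero_of_add_mul_eq_zero (f := (kappaTail k n : R2 k →+* S2 k))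
      (kappaTail_injective (by omega)) hsq (not_isSquare_trinomialTail (by omega))
  rw [show RingHom.ker (kappa2 k n) = RingHom.ker (kappa2 k n : _ →+* S2 k) from rfl,
    kappa2_eq_eval₂RingHom_comp, ← RingHom.comap_ker,
    ker_eval₂RingHom_eq_span_X_sq_sub_C (kappaTail k n : R2 k →+* S2 k) hsq hind,
    Ideal.comap_coe, ← Ideal.map_symm, Ideal.map_span, Set.image_singleton]
  congr 2
  exact (RingEquiv.symm_apply_eq _).2 (optionPolyEquiv_trinomial k n).symm

/-- for odd `n = 2k+1 ≥ 3`, the kernel of `κ` is the principal ideal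
generated by the trinomial `Z₁² − Z₂²T_ε − 4Z₃ⁿ·∏ T_i^{n−2i}`. -/
theorem stmt2 (k n : ℕ) (hk : 1 ≤ k) (hn : n = 2 * k + 1) :
    RingHom.ker (kappa2 k n) =
      Ideal.span
        {(X (Sum.inl 0) ^ 2 - X (Sum.inl 1) ^ 2 * X (Sum.inl 4)
            - 4 * X (Sum.inl 2) ^ n *
              ∏ i : Fin k, X (Sum.inr i) ^ (n - 2 * ((i : ℕ) + 1)) :
          MvPolynomial (Fin 5 ⊕ Fin k) ℂ)} :=
  stmt2_general k n hn
end
end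

section
/- Let k ≥ 2. In ℝ^{k+1} consider the k+5 vectors: c₁ = (1,2,…,k,0), c₂ = (1,2,…,k,1), c₃ = (0,…,0,−2), c₄ = (1,1,…,1,0), c_{4+i} = −e_i for i = 1,…,k, and c_{k+5} = e_{k+1}. For each j ∈ {1,…,k+5} let F_j = cone({c_l : l ≠ j}). Then the intersection ⋂_{j=1}^{k+5} F_j equals cone(q, v₁, …, v_k), where q = e_{k+1} and v_i = (1,2,…,i−1,i,i,…,i,0) (first i−1 coordinates 1,2,…,i−1, coordinates i through k equal to i, last coordinate 0), and this cone equals the set {a ∈ ℝ^{k+1} : a_{k+1} ≥ 0, 2a₁ ≥ a₂, a_k ≥ a_{k−1}, and 2a_i ≥ a_{i−1} + a_{i+1} for all 1 < i < k}. -/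
/-- The cone generated by a set `S` of vectors: all finite nonnegative real
linear combinations of elements of `S`. -/
def cone {m : ℕ} (S : Set (Fin m → ℝ)) : Set (Fin m → ℝ) :=
  {x | ∃ (n : ℕ) (c : Fin n → ℝ) (g : Fin n → (Fin m → ℝ)),
    (∀ i, 0 ≤ c i) ∧ (∀ i, g i ∈ S) ∧ x = ∑ i, c i • g i}

/-!
The `k + 1` vectors `v₁, …, v_k, q` form a basis of `ℝ^{k+1}` whose dual basis consists of the
functionals defining the polyhedron: `a_{k+1}` and the second differences
`2aᵢ - a_{i-1} - a_{i+1}`, `i = 1, …, k`, where `a₀` is read as `0` and, for `i = k`, the right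
neighbour `a_{k+1}` is read as `a_k`. Hence `cone(q, v)` is the simplicial cone cut out by these
inequalities.

Every generator lies in every facet cone `F_j`: `q = c₆ = c₂ + ∑ i c_{4+i}` and
`vᵢ = c₁ + ∑_{j>i} (j - i) c_{4+j} = i c₄ + ∑_{j<i} (i - j) c_{4+j}`.
Conversely, the `i`-th second difference is nonnegative on every column except `c_{4+i} = -eᵢ`,
and `a_{k+1}` on every column except `c₃`, so each defining inequality holds on some `F_j`.
-/

open PointedCone Module

theorem cone_eq_hull {m : ℕ} (S : Set (Fin m → ℝ)) :
    cone S = (hull ℝ S : Set (Fin m → ℝ)) := by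
  ext x
  constructor
  · rintro ⟨n, c, g, hc, hg, rfl⟩
    exact Submodule.sum_mem _ fun i _ => PointedCone.smul_mem _ (hc i) (subset_hull (hg i))
  · intro hx
    obtain ⟨n, c, g, rfl⟩ := Submodule.mem_span_set'.mp hx
    exact ⟨n, fun i => c i, fun i => g i, fun i => (c i).2, fun i => (g i).2, rfl⟩

theorem sum_smul_eq_self_of_biorthogonal {K E ι : Type*} [Field K] [AddCommGroup E]
    [Module K E] [FiniteDimensional K E] [Fintype ι] [DecidableEq ι] {g : ι → E}
    {φ : ι → Dual K E} (hφg : ∀ i j, φ i (g j) = if i = j then 1 else 0)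
    (hcard : Fintype.card ι = finrank K E) (x : E) : ∑ i, φ i x • g i = x := by
  set T := Fintype.linearCombination K g
  have hφT : ∀ t i, φ i (T t) = t i := by
    intro t i
    simp [T, Fintype.linearCombination_apply, hφg]
  have hT : Function.Surjective T := by
    refine (LinearMap.injective_iff_surjective_of_finrank_eq_finrank (by simpa using hcard)).mp ?_
    intro s t hst
    funext i
    simpa [hφT] using congrArg (φ i) hst
  obtain ⟨t, rfl⟩ := hT x
  simp only [hφT]
  rfl

theorem apply_nonneg_of_mem_hull {E : Type*} [AddCommGroup E] [Module ℝ E] {s : Set E}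
    {φ : Dual ℝ E} (hφ : ∀ x ∈ s, 0 ≤ φ x) {x : E} (hx : x ∈ hull ℝ s) :
    0 ≤ φ x := by
  have hle : hull ℝ s ≤ (positive ℝ ℝ).comap φ := Submodule.span_le.mpr hφ
  exact hle hx

theorem hull_range_eq_of_biorthogonal {E ι : Type*} [AddCommGroup E] [Module ℝ E]
    [FiniteDimensional ℝ E] [Fintype ι] [DecidableEq ι] {g : ι → E} {φ : ι → Dual ℝ E}
    (hφg : ∀ i j, φ i (g j) = if i = j then 1 else 0)
    (hcard : Fintype.card ι = finrank ℝ E) :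
    (hull ℝ (Set.range g) : Set E) = {x | ∀ i, 0 ≤ φ i x} := by
  ext x
  constructor
  · intro hx i
    refine apply_nonneg_of_mem_hull ?_ hx
    rintro _ ⟨j, rfl⟩
    rw [hφg]
    split_ifs <;> norm_num
  · intro hx
    rw [← sum_smul_eq_self_of_biorthogonal hφg hcard x]
    exact Submodule.sum_mem _ fun i _ => PointedCone.smul_mem _ (hx i) (subset_hull ⟨i, rfl⟩)

namespace DihedralMovableCone

variable (k : ℕ)

def genQ (j : Fin (k + 1)) : ℝ := if (j : ℕ) = k then 1 else 0

def genV (i : Fin k) (j : Fin (k + 1)) : ℝ :=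
  if (j : ℕ) < k then ((min ((j : ℕ) + 1) ((i : ℕ) + 1) : ℕ) : ℝ) else 0

def gen : Fin (k + 1) → Fin (k + 1) → ℝ := Fin.snoc (genV k) (genQ k)

/-- The columns `c₁, …, c₄`, then `c_{4+i} = -eᵢ`, then `c_{k+5} = q`. -/
def weightColumn : Fin 4 ⊕ Fin k ⊕ Unit → Fin (k + 1) → ℝ :=
  Sum.elim
    ![fun j => if (j : ℕ) < k then (((j : ℕ) + 1 : ℕ) : ℝ) else 0,
      fun j => if (j : ℕ) < k then (((j : ℕ) + 1 : ℕ) : ℝ) else 1,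
      fun j => if (j : ℕ) = k then (-2 : ℝ) else 0,
      fun j => if (j : ℕ) < k then (1 : ℝ) else 0]
    (Sum.elim (fun i j => if (j : ℕ) = (i : ℕ) then (-1 : ℝ) else 0) fun _ => genQ k)

/-- Coordinates are `0`-based here; clamping at `k - 1` makes coordinate `k - 1` its own right
neighbour in the last second difference. -/
def clamp (n : ℕ) : Fin (k + 1) := ⟨min n (k - 1), by omega⟩

def secondDiff (m : ℕ) : Dual ℝ (Fin (k + 1) → ℝ) :=
  2 • LinearMap.proj (clamp k m) - (if m = 0 then 0 else LinearMap.proj (clamp k (m - 1)))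
    - LinearMap.proj (clamp k (m + 1))

def genCoord : Fin (k + 1) → Dual ℝ (Fin (k + 1) → ℝ) :=
  Fin.snoc (fun m : Fin k => secondDiff k m) (LinearMap.proj (Fin.last k))

variable {k}

theorem clamp_val (n : ℕ) : (clamp k n : ℕ) = min n (k - 1) := rfl

theorem clamp_of_le {n : ℕ} (hn : n ≤ k - 1) : clamp k n = ⟨n, by omega⟩ :=
  Fin.ext (min_eq_left hn)

theorem clamp_pred_add_one : clamp k (k - 1 + 1) = clamp k (k - 1) :=
  Fin.ext (by simp only [clamp_val]; omega)

theorem secondDiff_apply (m : ℕ) (a : Fin (k + 1) → ℝ) :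
    secondDiff k m a = 2 * a (clamp k m) - (if m = 0 then 0 else a (clamp k (m - 1)))
      - a (clamp k (m + 1)) := by
  split_ifs with hm <;> simp [secondDiff, hm]

theorem genV_clamp (i : Fin k) (n : ℕ) :
    genV k i (clamp k n) = ((min (n + 1) (i + 1) : ℕ) : ℝ) := by
  have := i.isLt
  rw [genV, clamp_val, if_pos (by omega),
    show min (min n (k - 1) + 1) (i + 1) = min (n + 1) (i + 1) by omega]

theorem genV_castSucc (i j : Fin k) :
    genV k i j.castSucc = ((min (j + 1) (i + 1) : ℕ) : ℝ) := by
  simp [genV]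

theorem genV_last (i : Fin k) : genV k i (Fin.last k) = 0 := by
  simp [genV]

theorem secondDiff_genV (m : ℕ) (i : Fin k) :
    secondDiff k m (genV k i) = if m = i then 1 else 0 := by
  have hprev : (if m = 0 then 0 else genV k i (clamp k (m - 1))) =
      ((min m (i + 1) : ℕ) : ℝ) := by
    split_ifs with h0
    · simp [h0]
    · rw [genV_clamp, Nat.sub_add_cancel (by omega)]
  rw [secondDiff_apply, hprev, genV_clamp, genV_clamp]
  rcases lt_trichotomy m i with h | rfl | h
  · rw [if_neg h.ne, min_eq_left (by omega), min_eq_left (by omega), min_eq_left (by omega)]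
    push_cast
    ring
  · rw [if_pos rfl, min_eq_left (by omega), min_eq_left (by omega), min_eq_right (by omega)]
    push_cast
    ring
  · rw [if_neg h.ne', min_eq_right (by omega), min_eq_right (by omega), min_eq_right (by omega)]
    ring

theorem secondDiff_genQ {m : ℕ} (hm : m < k) : secondDiff k m (genQ k) = 0 := by
  have hzero : ∀ n, genQ k (clamp k n) = 0 := fun n => by
    rw [genQ, clamp_val, if_neg (by omega)]
  simp [secondDiff_apply, hzero]

theorem genCoord_gen (i j : Fin (k + 1)) :
    genCoord k i (gen k j) = if i = j then 1 else 0 := by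
  induction i using Fin.lastCases with
  | last =>
    induction j using Fin.lastCases with
    | last => simp [genCoord, gen, genQ]
    | cast j => simp [genCoord, gen, genV, (Fin.castSucc_lt_last j).ne']
  | cast m =>
    induction j using Fin.lastCases with
    | last => simp [genCoord, gen, secondDiff_genQ m.isLt, (Fin.castSucc_lt_last m).ne]
    | cast j => simp [genCoord, gen, secondDiff_genV, Fin.ext_iff]

theorem hull_range_gen :
    (hull ℝ (Set.range (gen k)) : Set (Fin (k + 1) → ℝ)) =
      {a | ∀ i, 0 ≤ genCoord k i a} :=
  hull_range_eq_of_biorthogonal genCoord_gen (by simp)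

theorem forall_genCoord_nonneg_iff (hk : 2 ≤ k) (a : Fin (k + 1) → ℝ) :
    (∀ i, 0 ≤ genCoord k i a) ↔
      0 ≤ a (Fin.last k) ∧ a (clamp k 1) ≤ 2 * a (clamp k 0) ∧
      a (clamp k (k - 2)) ≤ a (clamp k (k - 1)) ∧
      ∀ i, 0 < i → i + 2 ≤ k →
        a (clamp k (i - 1)) + a (clamp k (i + 1)) ≤ 2 * a (clamp k i) := by
  simp only [Fin.forall_fin_succ', genCoord, Fin.snoc_castSucc, Fin.snoc_last,
    LinearMap.proj_apply, secondDiff_apply]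
  have hpred : k - 1 - 1 = k - 2 := by omega
  constructor
  · rintro ⟨hsecond, hlast⟩
    refine ⟨hlast, ?_, ?_, fun i h0 hi => ?_⟩
    · have := hsecond ⟨0, by omega⟩
      simp only [if_pos] at this
      linarith
    · have := hsecond ⟨k - 1, by omega⟩
      simp only [if_neg (show k - 1 ≠ 0 by omega), clamp_pred_add_one, hpred] at this
      linarith
    · have := hsecond ⟨i, by omega⟩
      simp only [if_neg h0.ne'] at this
      linarith
  · rintro ⟨hlast, hfirst, hpenult, hmid⟩
    refine ⟨fun ⟨m, hm⟩ => ?_, hlast⟩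
    dsimp only
    rcases Nat.eq_zero_or_pos m with rfl | h0
    · simp only [if_pos]
      linarith
    rw [if_neg h0.ne']
    rcases (show m = k - 1 ∨ m + 2 ≤ k by omega) with rfl | hm2
    · rw [clamp_pred_add_one, hpred]
      linarith
    · linarith [hmid m h0 hm2]

theorem add_sum_smul_weightColumn_negStd (x b : Fin (k + 1) → ℝ)
    (hlast : x (Fin.last k) = b (Fin.last k)) :
    b + ∑ j : Fin k, (b j.castSucc - x j.castSucc) • weightColumn k (.inr (.inl j)) = x := by
  funext p
  induction p using Fin.lastCases with
  | last => simp [weightColumn, hlast, fun j : Fin k => j.isLt.ne']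
  | cast p => simp [weightColumn, Fin.val_eq_val]

/-- The columns `c_{4+j} = -eⱼ` allow lowering any of the first `k` coordinates. -/
theorem mem_facet_of_le {l : Fin 4 ⊕ Fin k ⊕ Unit} {x b : Fin (k + 1) → ℝ}
    (hb : b ∈ hull ℝ (weightColumn k '' {l' | l' ≠ l}))
    (hlast : x (Fin.last k) = b (Fin.last k))
    (hle : ∀ j : Fin k, x j.castSucc ≤ b j.castSucc)
    (heq : ∀ j : Fin k, l = .inr (.inl j) → x j.castSucc = b j.castSucc) :
    x ∈ hull ℝ (weightColumn k '' {l' | l' ≠ l}) := by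
  rw [← add_sum_smul_weightColumn_negStd x b hlast]
  refine add_mem hb (Submodule.sum_mem _ fun j _ => ?_)
  by_cases hj : l = .inr (.inl j)
  · simp [heq j hj]
  · exact PointedCone.smul_mem _ (sub_nonneg.2 (hle j)) (subset_hull ⟨_, Ne.symm hj, rfl⟩)

theorem genV_mem_facet_of_le {l : Fin 4 ⊕ Fin k ⊕ Unit} {i : Fin k} (hl : l ≠ .inl 0)
    (hli : ∀ j, l = .inr (.inl j) → j ≤ i) :
    genV k i ∈ hull ℝ (weightColumn k '' {l' | l' ≠ l}) := by
  refine mem_facet_of_le (subset_hull ⟨.inl 0, Ne.symm hl, rfl⟩) ?_ (fun j => ?_)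
    (fun j hj => ?_)
  · simp [genV_last, weightColumn]
  · simp [genV_castSucc, weightColumn]
  · have : (j : ℕ) ≤ i := hli j hj
    simp [genV_castSucc, weightColumn, min_eq_left (Nat.succ_le_succ this)]

theorem genV_mem_facet_of_ge {l : Fin 4 ⊕ Fin k ⊕ Unit} {i : Fin k} (hl : l ≠ .inl 3)
    (hli : ∀ j, l = .inr (.inl j) → i ≤ j) :
    genV k i ∈ hull ℝ (weightColumn k '' {l' | l' ≠ l}) := by
  refine mem_facet_of_le (b := ((i + 1 : ℕ) : ℝ) • weightColumn k (.inl 3))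
    (PointedCone.smul_mem _ (Nat.cast_nonneg _) (subset_hull ⟨.inl 3, Ne.symm hl, rfl⟩)) ?_
    (fun j => ?_) (fun j hj => ?_)
  · simp [genV_last, weightColumn]
  · simp [genV_castSucc, weightColumn]
  · have : (i : ℕ) ≤ j := hli j hj
    simp [genV_castSucc, weightColumn, min_eq_right (Nat.succ_le_succ this)]

theorem genV_mem_facet (l : Fin 4 ⊕ Fin k ⊕ Unit) (i : Fin k) :
    genV k i ∈ hull ℝ (weightColumn k '' {l' | l' ≠ l}) := by
  rcases l with l | m | ⟨⟩
  · by_cases hl : l = 0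
    · exact genV_mem_facet_of_ge (by simp [hl]) (by simp)
    · exact genV_mem_facet_of_le (by simpa using hl) (by simp)
  · rcases le_total m i with h | h
    · exact genV_mem_facet_of_le (by simp) (by simp [h])
    · exact genV_mem_facet_of_ge (by simp) (by simp [h])
  · exact genV_mem_facet_of_le (by simp) (by simp)

theorem genQ_mem_facet (l : Fin 4 ⊕ Fin k ⊕ Unit) :
    genQ k ∈ hull ℝ (weightColumn k '' {l' | l' ≠ l}) := by
  by_cases hl : l = .inr (.inr ())
  · subst hl
    refine mem_facet_of_le (subset_hull ⟨.inl 1, by simp, rfl⟩) ?_ (fun j => ?_) (by simp)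
    · simp [genQ, weightColumn]
    · simp [genQ, weightColumn, j.isLt.ne]
      positivity
  · exact subset_hull ⟨.inr (.inr ()), Ne.symm hl, rfl⟩

theorem hull_range_gen_le_facet (l : Fin 4 ⊕ Fin k ⊕ Unit) :
    hull ℝ (Set.range (gen k)) ≤ hull ℝ (weightColumn k '' {l' | l' ≠ l}) := by
  refine Submodule.span_le.mpr (Set.range_subset_iff.mpr fun j => ?_)
  induction j using Fin.lastCases with
  | last => simpa [gen] using genQ_mem_facet l
  | cast i => simpa [gen] using genV_mem_facet l i

theorem weightColumn_inl_zero (hk : 0 < k) :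
    weightColumn k (.inl 0) = genV k ⟨k - 1, by omega⟩ := by
  funext j
  simp only [weightColumn, genV, Sum.elim_inl, Matrix.cons_val_zero]
  split_ifs
  · rw [min_eq_left (by omega)]
  · rfl

theorem weightColumn_inl_one (hk : 0 < k) :
    weightColumn k (.inl 1) = genV k ⟨k - 1, by omega⟩ + genQ k := by
  funext j
  simp only [weightColumn, genV, genQ, Sum.elim_inl, Matrix.cons_val_one,
    Matrix.cons_val_zero, Pi.add_apply]
  split_ifs <;> first | (exfalso; omega) | simp only [add_zero, zero_add]
  rw [min_eq_left (by omega)]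

theorem weightColumn_inl_two : weightColumn k (.inl 2) = (-2 : ℝ) • genQ k := by
  funext j
  simp [weightColumn, genQ]

theorem weightColumn_inl_three (hk : 0 < k) : weightColumn k (.inl 3) = genV k ⟨0, hk⟩ := by
  funext j
  simp [weightColumn, genV]

theorem secondDiff_weightColumn_negStd_nonneg {m : ℕ} (hm : m < k) {j : Fin k} (hj : m ≠ j) :
    0 ≤ secondDiff k m (weightColumn k (.inr (.inl j))) := by
  rw [secondDiff_apply]
  simp only [weightColumn, Sum.elim_inr, Sum.elim_inl]
  split_ifs <;> simp only [clamp_val] at * <;> first | (exfalso; omega) | norm_num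

variable (k) in
def negColumn : Fin (k + 1) → Fin 4 ⊕ Fin k ⊕ Unit :=
  Fin.snoc (fun m => .inr (.inl m)) (.inl 2)

theorem genCoord_weightColumn_nonneg (hk : 0 < k) {i : Fin (k + 1)}
    {l : Fin 4 ⊕ Fin k ⊕ Unit} (hl : l ≠ negColumn k i) :
    0 ≤ genCoord k i (weightColumn k l) := by
  induction i using Fin.lastCases with
  | last =>
    rcases l with l | m | ⟨⟩
    · fin_cases l <;> simp_all [genCoord, negColumn, weightColumn]
    · simp [genCoord, weightColumn, m.isLt.ne']
    · simp [genCoord, weightColumn, genQ]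
  | cast m =>
    have hV : ∀ i, 0 ≤ secondDiff k m (genV k i) := fun i => by
      rw [secondDiff_genV]
      split_ifs <;> norm_num
    have hQ := secondDiff_genQ m.isLt
    simp only [genCoord, Fin.snoc_castSucc]
    rcases l with l | j | ⟨⟩
    · fin_cases l
      · simpa [weightColumn_inl_zero hk] using hV _
      · simpa [weightColumn_inl_one hk, hQ] using hV _
      · simp [weightColumn_inl_two, hQ]
      · simpa [weightColumn_inl_three hk] using hV _
    · refine secondDiff_weightColumn_negStd_nonneg m.isLt ?_
      simpa [negColumn, Fin.ext_iff, eq_comm] using hl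
    · simp [weightColumn, hQ]

theorem iInter_facet_subset (hk : 0 < k) :
    ⋂ l, (hull ℝ (weightColumn k '' {l' | l' ≠ l}) : Set (Fin (k + 1) → ℝ)) ⊆
      {a | ∀ i, 0 ≤ genCoord k i a} := fun a ha i =>
  apply_nonneg_of_mem_hull
    (by rintro _ ⟨l, hl, rfl⟩; exact genCoord_weightColumn_nonneg hk hl)
    (Set.mem_iInter.mp ha (negColumn k i))

end DihedralMovableCone

open DihedralMovableCone in
/-- the intersection of the cones spanned by all size-`(k+4)` subsets
(facet images) of the `k+5` columns of the weight matrix equals `cone(q, v₁, …, v_k)`,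
which in turn equals the polyhedron cut out by the stated inequalities. -/
theorem stmt4 (k : ℕ) (hk : 2 ≤ k)
    (c : (Fin 4 ⊕ Fin k ⊕ Unit) → Fin (k + 1) → ℝ)
    (hc1 : c (Sum.inl 0) = fun j : Fin (k + 1) =>
      if (j : ℕ) < k then (((j : ℕ) + 1 : ℕ) : ℝ) else 0)
    (hc2 : c (Sum.inl 1) = fun j : Fin (k + 1) =>
      if (j : ℕ) < k then (((j : ℕ) + 1 : ℕ) : ℝ) else 1)
    (hc3 : c (Sum.inl 2) = fun j : Fin (k + 1) =>
      if (j : ℕ) = k then (-2 : ℝ) else 0)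
    (hc4 : c (Sum.inl 3) = fun j : Fin (k + 1) =>
      if (j : ℕ) < k then (1 : ℝ) else 0)
    (hc5 : ∀ i : Fin k, c (Sum.inr (Sum.inl i)) = fun j : Fin (k + 1) =>
      if (j : ℕ) = (i : ℕ) then (-1 : ℝ) else 0)
    (hc6 : c (Sum.inr (Sum.inr ())) = fun j : Fin (k + 1) =>
      if (j : ℕ) = k then (1 : ℝ) else 0)
    (q : Fin (k + 1) → ℝ) (hq : q = fun j : Fin (k + 1) =>
      if (j : ℕ) = k then (1 : ℝ) else 0)
    (v : Fin k → Fin (k + 1) → ℝ)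
    (hv : ∀ i j, v i j =
      if (j : ℕ) < k then ((min ((j : ℕ) + 1) ((i : ℕ) + 1) : ℕ) : ℝ) else 0) :
    (⋂ l : Fin 4 ⊕ Fin k ⊕ Unit, cone (c '' {l' | l' ≠ l}))
      = cone ({q} ∪ Set.range v) ∧
    cone ({q} ∪ Set.range v)
      = {a : Fin (k + 1) → ℝ |
          0 ≤ a ⟨k, by omega⟩ ∧
          a ⟨1, by omega⟩ ≤ 2 * a ⟨0, by omega⟩ ∧
          a ⟨k - 2, by omega⟩ ≤ a ⟨k - 1, by omega⟩ ∧
          ∀ (i : ℕ) (h1 : 0 < i) (h2 : i + 2 ≤ k),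
            a ⟨i - 1, by omega⟩ + a ⟨i + 1, by omega⟩ ≤ 2 * a ⟨i, by omega⟩} := by
  obtain rfl : c = weightColumn k := by
    funext l
    rcases l with l | i | ⟨⟩
    · fin_cases l
      exacts [hc1, hc2, hc3, hc4]
    · exact hc5 i
    · exact hc6
  obtain rfl : v = genV k := funext fun i => funext (hv i)
  obtain rfl : q = genQ k := hq
  have hrange : {genQ k} ∪ Set.range (genV k) = Set.range (gen k) := by
    rw [gen, Fin.range_snoc, Set.insert_eq]
  simp only [cone_eq_hull, hrange, hull_range_gen]
  refine ⟨(iInter_facet_subset (by omega)).antisymm ?_, Set.ext fun a => ?_⟩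
  · rw [← hull_range_gen]
    exact Set.subset_iInter hull_range_gen_le_facet
  · refine (forall_genCoord_nonneg_iff hk a).trans ?_
    simp +contextual (disch := omega) only [clamp_of_le, Fin.last, Set.mem_ofPred_eq]
end

section
/- Let G be a finite subgroup of GL(2,ℂ), and let H = (ℂ*·G) ∩ SL(2,ℂ), the subgroup of all determinant-one matrices that are scalar multiples of elements of G. For m ≥ 1 let μ_m denote the subgroup of GL(2,ℂ) of scalar matrices c·I with c^m = 1. Then there exist positive integers w and d, a normal subgroup K of H, and a group isomorphism φ : μ_{wd}/μ_d ≅ H/K such that G = {s·h : s ∈ μ_{wd}, h ∈ H, φ(s·μ_d) = h·K}. -/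
/-!
Since scalars are central, `L = {(z, h) ∈ Z(Γ) × H | z * h ∈ G}` is a subgroup of `Z(Γ) × H`.
When every element of `G` is a central multiple of an element of `H` and vice versa, `G` is the
image of `L` under multiplication and the second projection of `L` is all of `H`; so Goursat's
lemma makes `L` the graph of an isomorphism between quotients of its two projections, the kernels
being the elements of the two factors that already lie in `G`.

For a finite `G ≤ GL(n, K)` over an algebraically closed field, `H = (K^× · G) ∩ SL(n, K)` satisfies
these hypotheses (scale `g` by an `n`-th root of `(det g)⁻¹`). The central factors form a finite
group of scalars, hence are the `N`-th roots of unity `μ_N`, and those lying in `G` form `μ_d`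
for some `d ∣ N`.
-/

open Function

namespace Subgroup
variable {Γ : Type*} [Group Γ]

/-- In the classification this is the group of scalars `μ_{wd}`. -/
def centralFactors (G H : Subgroup Γ) : Subgroup Γ where
  carrier := {z | z ∈ center Γ ∧ ∃ h ∈ H, z * h ∈ G}
  one_mem' := ⟨one_mem _, 1, one_mem _, by simp⟩
  mul_mem' := by
    rintro a b ⟨ha, h, hh, hah⟩ ⟨hb, k, hk, hbk⟩
    refine ⟨mul_mem ha hb, h * k, mul_mem hh hk, ?_⟩
    rw [mul_assoc, ← mul_assoc b, ← mem_center_iff.mp hb, mul_assoc, ← mul_assoc]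
    exact mul_mem hah hbk
  inv_mem' := by
    rintro a ⟨ha, h, hh, hah⟩
    refine ⟨inv_mem ha, h⁻¹, inv_mem hh, ?_⟩
    rw [← mul_inv_rev, mem_center_iff.mp ha]
    exact inv_mem hah

variable {G H : Subgroup Γ}

lemma mul_mem_iff_of_mul_mem {z₁ z₂ : Γ} (h₁ : z₁ ∈ center Γ) (h₂ : z₂ ∈ center Γ) {x : Γ}
    (hx : z₁ * x ∈ G) (y : Γ) : z₂ * y ∈ G ↔ z₁⁻¹ * z₂ * (x⁻¹ * y) ∈ G := by
  have hz : z₁⁻¹ * z₂ ∈ center Γ := mul_mem (inv_mem h₁) h₂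
  have key : (z₁ * x)⁻¹ * (z₂ * y) = z₁⁻¹ * z₂ * (x⁻¹ * y) :=
    calc (z₁ * x)⁻¹ * (z₂ * y) = x⁻¹ * (z₁⁻¹ * z₂) * y := by group
      _ = z₁⁻¹ * z₂ * (x⁻¹ * y) := by rw [mem_center_iff.mp hz x⁻¹, mul_assoc]
  rw [← key, mul_mem_cancel_left (inv_mem hx)]

lemma centralFactors_le_center : centralFactors G H ≤ center Γ := fun _ hz => hz.1

instance normal_subgroupOf_centralFactors (K : Subgroup Γ) :
    (K.subgroupOf (centralFactors G H)).Normal :=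
  ⟨fun k hk z => by
    have hzk : (z : Γ) * k = k * z := (mem_center_iff.mp (centralFactors_le_center z.2) k).symm
    rwa [mem_subgroupOf, coe_mul, coe_mul, hzk, coe_inv, mul_inv_cancel_right]⟩

lemma exists_center_mul_mem_of_le_center_sup (hH : H ≤ center Γ ⊔ G) {h : Γ} (hh : h ∈ H) :
    ∃ z ∈ center Γ, z * h ∈ G := by
  obtain ⟨z, hz, g, hg, rfl⟩ := mem_sup_of_normal_left.mp (hH hh)
  exact ⟨z⁻¹, inv_mem hz, by rwa [inv_mul_cancel_left]⟩

lemma normal_subgroupOf_of_le_center_sup (hH : H ≤ center Γ ⊔ G) : (G.subgroupOf H).Normal :=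
  ⟨fun k hk h => by
    obtain ⟨z, hz, g, hg, hzg⟩ := mem_sup_of_normal_left.mp (hH h.2)
    have hconj : (h : Γ) * k * (h : Γ)⁻¹ = g * k * g⁻¹ := by
      calc (h : Γ) * k * (h : Γ)⁻¹ = z * (g * k * g⁻¹) * z⁻¹ := by rw [← hzg]; group
        _ = g * k * g⁻¹ := by rw [← mem_center_iff.mp hz (g * k * g⁻¹), mul_inv_cancel_right]
    rw [mem_subgroupOf, coe_mul, coe_mul, coe_inv, hconj]
    exact mul_mem (mul_mem hg hk) (inv_mem hg)⟩

theorem exists_mulEquiv_mul_mem_iff (hH : H ≤ center Γ ⊔ G) :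
    ∃ (_ : (G.subgroupOf H).Normal)
      (e : centralFactors G H ⧸ G.subgroupOf (centralFactors G H) ≃* H ⧸ G.subgroupOf H),
      ∀ (z : centralFactors G H) (h : H), (z : Γ) * h ∈ G ↔ e z = h := by
  have hn := normal_subgroupOf_of_le_center_sup hH
  set Z := centralFactors G H
  have hcomm (z : Z) (h : H) : Commute (Z.subtype z) (H.subtype h) :=
    (mem_center_iff.mp (centralFactors_le_center z.2) h).symm
  let L : Subgroup (Z × H) := G.comap (Z.subtype.noncommCoprod H.subtype hcomm)
  let f : L →* (Z ⧸ G.subgroupOf Z) × (H ⧸ G.subgroupOf H) :=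
    ((QuotientGroup.mk' _).prodMap (QuotientGroup.mk' _)).comp L.subtype
  have hf₁ : Surjective (Prod.fst ∘ f) := by
    rintro ⟨z⟩
    obtain ⟨h, hh, hzh⟩ := z.2.2
    exact ⟨⟨(z, ⟨h, hh⟩), hzh⟩, rfl⟩
  have hf₂ : Surjective (Prod.snd ∘ f) := by
    rintro ⟨h⟩
    obtain ⟨z, hz, hzh⟩ := exists_center_mul_mem_of_le_center_sup hH h.2
    exact ⟨⟨(⟨z, hz, h, h.2, hzh⟩, h), hzh⟩, rfl⟩
  have hf (p q : L) : (f p).1 = (f q).1 ↔ (f p).2 = (f q).2 := by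
    have := (mul_mem_iff_of_mul_mem (centralFactors_le_center p.1.1.2)
      (centralFactors_le_center q.1.1.2) p.2 q.1.2).mp q.2
    change (p.1.1 : Z ⧸ G.subgroupOf Z) = q.1.1 ↔ (p.1.2 : H ⧸ G.subgroupOf H) = q.1.2
    simp only [QuotientGroup.eq, mem_subgroupOf, coe_mul, coe_inv]
    exact ⟨fun h₁ => (mul_mem_cancel_left h₁).mp this, fun h₂ => (mul_mem_cancel_right h₂).mp this⟩
  obtain ⟨e, he⟩ := f.exists_mulEquiv_range_eq_graph hf₁ hf₂ hf
  refine ⟨hn, e, fun z h => ⟨fun hzh => ?_, fun hzh => ?_⟩⟩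
  · exact (he ▸ ⟨_, rfl⟩ : f ⟨(z, h), hzh⟩ ∈ e.toMonoidHom.graph)
  · obtain ⟨p, hp⟩ : ((z : Z ⧸ G.subgroupOf Z), (h : H ⧸ G.subgroupOf H)) ∈ f.range :=
      he ▸ hzh
    obtain ⟨hpz, hph⟩ := Prod.ext_iff.mp hp
    change (p.1.1 : Z ⧸ G.subgroupOf Z) = z at hpz
    change (p.1.2 : H ⧸ G.subgroupOf H) = h at hph
    rw [QuotientGroup.eq, mem_subgroupOf, coe_mul, coe_inv] at hpz hph
    exact (mul_mem_iff_of_mul_mem (centralFactors_le_center p.1.1.2)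
      (centralFactors_le_center z.2) p.2 h).mpr (mul_mem hpz hph)

theorem exists_mulEquiv_mem_iff (hG : G ≤ center Γ ⊔ H) (hH : H ≤ center Γ ⊔ G) :
    ∃ (_ : (G.subgroupOf H).Normal)
      (e : centralFactors G H ⧸ G.subgroupOf (centralFactors G H) ≃* H ⧸ G.subgroupOf H),
      ∀ x : Γ, x ∈ G ↔ ∃ (z : Γ) (hz : z ∈ centralFactors G H) (h : Γ) (hh : h ∈ H),
        x = z * h ∧ e (QuotientGroup.mk ⟨z, hz⟩) = QuotientGroup.mk ⟨h, hh⟩ := by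
  obtain ⟨hn, e, he⟩ := exists_mulEquiv_mul_mem_iff hH
  refine ⟨hn, e, fun x => ⟨fun hx => ?_, ?_⟩⟩
  · obtain ⟨z, hz, h, hh, rfl⟩ := mem_sup_of_normal_left.mp (hG hx)
    exact ⟨z, ⟨hz, h, hh, hx⟩, h, hh, rfl, (he ⟨z, _⟩ ⟨h, hh⟩).mp hx⟩
  · rintro ⟨z, hz, h, hh, rfl, hzh⟩
    exact (he ⟨z, hz⟩ ⟨h, hh⟩).mpr hzh

lemma eq_rootsOfUnity_natCard {R : Type*} [CommRing R] [IsDomain R] (S : Subgroup Rˣ)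
    [Finite S] : S = rootsOfUnity (Nat.card S) R := by
  have : NeZero (Nat.card S) := ⟨Nat.card_pos.ne'⟩
  refine eq_of_le_of_card_ge (fun x hx => ?_) (card_rootsOfUnity R _)
  exact (mem_rootsOfUnity _ x).mpr (orderOf_dvd_iff_pow_eq_one.mp (S.orderOf_dvd_natCard hx))

end Subgroup

namespace Matrix.GeneralLinearGroup

open Subgroup

variable {n R : Type*} [Fintype n] [DecidableEq n] [CommRing R]

lemma scalar_mem_center (c : Rˣ) : scalar n c ∈ center (GL n R) :=
  center_eq_range_scalar (n := n) (R := R) ▸ MonoidHom.mem_range.mpr ⟨c, rfl⟩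

lemma val_scalar_mul (c : Rˣ) (g : GL n R) :
    ((scalar n c * g : GL n R) : Matrix n n R) = (c : R) • (g : Matrix n n R) := by
  rw [Units.val_mul, coe_scalar, scalar_apply, smul_eq_diagonal_mul]

lemma mem_map_scalar_rootsOfUnity_iff {m : ℕ} (hm : m ≠ 0) {x : GL n R} :
    x ∈ (rootsOfUnity m R).map (scalar n) ↔ ∃ c : R, c ^ m = 1 ∧ (x : Matrix n n R) = c • 1 := by
  constructor
  · rintro ⟨u, hu, rfl⟩
    refine ⟨u, (mem_rootsOfUnity' m u).mp hu, ?_⟩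
    rw [← mul_one (scalar n u), val_scalar_mul, Units.val_one]
  · rintro ⟨c, hc, hx⟩
    have hcu := IsUnit.of_pow_eq_one hc hm
    refine ⟨hcu.unit, (mem_rootsOfUnity' m _).mpr hc, Units.ext ?_⟩
    rw [← mul_one (scalar n _), val_scalar_mul, Units.val_one, hx, IsUnit.unit_spec]

section Field

variable {K : Type*} [Field K]

def detOneScalarMul (G : Subgroup (GL n K)) : Subgroup (GL n K) :=
  (center (GL n K) ⊔ G) ⊓ det.ker

variable {G : Subgroup (GL n K)}

lemma mem_detOneScalarMul_iff {x : GL n K} :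
    x ∈ detOneScalarMul G ↔ (x : Matrix n n K).det = 1 ∧
      ∃ c : K, c ≠ 0 ∧ ∃ g ∈ G, (x : Matrix n n K) = c • (g : Matrix n n K) := by
  rw [detOneScalarMul, mem_inf, mem_sup_of_normal_left, center_eq_range_scalar, MonoidHom.mem_ker,
    Units.ext_iff, val_det_apply, Units.val_one]
  refine and_comm.trans (and_congr_right' ⟨?_, ?_⟩)
  · rintro ⟨_, ⟨c, rfl⟩, g, hg, rfl⟩
    exact ⟨c, c.ne_zero, g, hg, val_scalar_mul c g⟩
  · rintro ⟨c, hc, g, hg, hx⟩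
    exact ⟨_, ⟨Units.mk0 c hc, rfl⟩, g, hg, Units.ext (by rw [val_scalar_mul, hx, Units.val_mk0])⟩

lemma le_center_sup_detOneScalarMul [IsAlgClosed K] [Nonempty n] (G : Subgroup (GL n K)) :
    G ≤ center (GL n K) ⊔ detOneScalarMul G := by
  intro g hg
  obtain ⟨c, hc⟩ := IsAlgClosed.exists_pow_nat_eq ((det g)⁻¹ : Kˣ).val (Fintype.card_pos (α := n))
  set u := Units.mk0 c (ne_zero_pow Fintype.card_ne_zero (hc ▸ Units.ne_zero _))
  have hu : u ^ Fintype.card n = (det g)⁻¹ :=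
    Units.ext (by rw [Units.val_pow_eq_pow_val, Units.val_mk0, hc])
  have hdet : det (scalar n u * g) = 1 := by rw [map_mul, det_scalar, hu, inv_mul_cancel]
  refine mem_sup_of_normal_left.mpr ⟨scalar n u⁻¹, ?_, scalar n u * g, ⟨?_, hdet⟩, ?_⟩
  · exact scalar_mem_center _
  · exact mul_mem_sup (scalar_mem_center u) hg
  · rw [← mul_assoc, ← map_mul, inv_mul_cancel, map_one, one_mul]

lemma comap_scalar_centralFactors_le_rootsOfUnity :
    (centralFactors G (detOneScalarMul G)).comap (scalar n) ≤
      rootsOfUnity (Fintype.card n * Nat.card G) K := by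
  rintro c ⟨-, h, ⟨-, hh⟩, hch⟩
  have := congrArg det (orderOf_dvd_iff_pow_eq_one.mp (G.orderOf_dvd_natCard hch))
  rw [map_pow, map_mul, det_scalar, MonoidHom.mem_ker.mp hh, mul_one, ← pow_mul, map_one] at this
  exact (mem_rootsOfUnity _ c).mpr this

end Field

end Matrix.GeneralLinearGroup

open Matrix Subgroup GeneralLinearGroup

/-- classification of finite subgroups of `GL(2,ℂ)`:
`G = (μ_{wd} | μ_d ; H | K)` for some `w, d ≥ 1`, a normal subgroup `K` of
`H = (ℂ*·G) ∩ SL(2,ℂ)`, and an isomorphism `φ : μ_{wd}/μ_d ≅ H/K`. -/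
theorem stmt8 (G H : Subgroup (GL (Fin 2) ℂ)) [Finite G]
    (hH : ∀ h : GL (Fin 2) ℂ, h ∈ H ↔
      (Matrix.det (h : Matrix (Fin 2) (Fin 2) ℂ) = 1 ∧
        ∃ c : ℂ, c ≠ 0 ∧ ∃ g ∈ G,
          (h : Matrix (Fin 2) (Fin 2) ℂ) = c • (g : Matrix (Fin 2) (Fin 2) ℂ)))
    (μ : ℕ → Subgroup (GL (Fin 2) ℂ))
    (hμ : ∀ (m : ℕ) (x : GL (Fin 2) ℂ), x ∈ μ m ↔
      ∃ c : ℂ, c ^ m = 1 ∧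
        (x : Matrix (Fin 2) (Fin 2) ℂ) = c • (1 : Matrix (Fin 2) (Fin 2) ℂ)) :
    ∃ (w d : ℕ), 0 < w ∧ 0 < d ∧
      ∃ K : Subgroup (GL (Fin 2) ℂ), K ≤ H ∧
        ∃ (hKn : (K.subgroupOf H).Normal)
          (hμn : ((μ d).subgroupOf (μ (w * d))).Normal),
          letI := hKn
          letI := hμn
          ∃ φ : (↥(μ (w * d)) ⧸ (μ d).subgroupOf (μ (w * d))) ≃* (↥H ⧸ K.subgroupOf H),
            ∀ x : GL (Fin 2) ℂ, x ∈ G ↔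
              ∃ (s : GL (Fin 2) ℂ) (hs : s ∈ μ (w * d)) (h : GL (Fin 2) ℂ) (hh : h ∈ H),
                x = s * h ∧
                  φ (QuotientGroup.mk ⟨s, hs⟩) = QuotientGroup.mk ⟨h, hh⟩ := by
  obtain rfl : H = detOneScalarMul G := ext fun h => (hH h).trans mem_detOneScalarMul_iff.symm
  obtain ⟨hHn, e, he⟩ := exists_mulEquiv_mem_iff (le_center_sup_detOneScalarMul G) inf_le_left
  set Z := centralFactors G (detOneScalarMul G)
  have hμ' (m : ℕ) (hm : m ≠ 0) : μ m = (rootsOfUnity m ℂ).map (scalar (Fin 2)) :=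
    ext fun x => (hμ m x).trans (mem_map_scalar_rootsOfUnity_iff hm).symm
  set B := Z.comap (scalar (Fin 2))
  set D := G.comap (scalar (Fin 2))
  have hDB : D ≤ B := fun c hc => ⟨scalar_mem_center c, 1, one_mem _, by rwa [mul_one]⟩
  have : NeZero (Fintype.card (Fin 2) * Nat.card G) := ⟨mul_ne_zero (by simp) Nat.card_pos.ne'⟩
  have : Finite B :=
    Finite.of_injective _ (inclusion_injective comap_scalar_centralFactors_le_rootsOfUnity)
  have : Finite D := Finite.of_injective _ (inclusion_injective hDB)
  have hZ : Z = μ (Nat.card B) := by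
    rw [hμ' _ Nat.card_pos.ne', ← eq_rootsOfUnity_natCard B,
      map_comap_eq_self (centralFactors_le_center.trans center_eq_range_scalar.le)]
  have hD : (μ (Nat.card D)).subgroupOf Z = G.subgroupOf Z := by
    rw [hμ' _ Nat.card_pos.ne', ← eq_rootsOfUnity_natCard D, map_comap_eq,
      ← center_eq_range_scalar]
    exact ext fun z => and_iff_right (centralFactors_le_center z.2)
  have hdvd := card_dvd_of_le hDB
  refine ⟨Nat.card B / Nat.card D, Nat.card D, Nat.div_pos (Nat.le_of_dvd Nat.card_pos hdvd)
    Nat.card_pos, Nat.card_pos, G ⊓ detOneScalarMul G, inf_le_right, ?_⟩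
  rw [Nat.div_mul_cancel hdvd, ← hZ, hD, inf_subgroupOf_right]
  exact ⟨hHn, inferInstance, e, he⟩
end

section
/- Let n = 2k+1 ≥ 3 be odd, and work in the polynomial ring R = ℂ[Z₁,Z₂,Z₃,Z₄,T_ε,T₁,…,T_k]. Let I_k be the principal ideal generated by Z₁² − Z₂²T_ε − 4Z₃ⁿ·∏_{i=1}^{k} T_i^{n−2i}, and let J_k = I_k + (Z₁·T₁T₂²⋯T_k^k, Z₂Z₄T_ε·T₁T₂²⋯T_k^k, Z₃·T₁T₂⋯T_k, Z₄²T_ε). Then the radical of J_k equals the intersection of the following 2k+2 ideals: (Z₄, T_i, Z₁²−Z₂²T_ε) for i = 1,…,k; (Z₁, T_ε, T_i) for i = 1,…,k; (Z₁, Z₃, T_ε); and (Z₁, Z₂, Z₃, Z₄). -/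
/-!
By the Nullstellensatz both sides are vanishing ideals of their zero loci, so it suffices that
each of the `2k+2` ideals is radical and that `V(J_k)` is the union of their zero loci.

On `V(J_k)`: if some `T_i` vanishes, the equation of `I_k` reduces to `Z₁² = Z₂² T_ε` (this is
why `Z₁² - Z₂² T_ε` lies in the radical of `J_k`), and `Z₄² T_ε = 0` chooses between the first
two families; if no `T_i` vanishes then `Z₁ = Z₃ = 0` and `Z₂² T_ε = Z₄² T_ε = 0`.

Adding variables that do not occur in a radical ideal keeps it radical (set them to zero), so the
only real work is that `(Z₁² - Z₂² T_ε)` is radical: divide a polynomial vanishing on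
`Z₁² = Z₂² T_ε` by this polynomial, monic in `Z₁`; the remainder is linear in `Z₁` and vanishes at
both square roots of `Z₂² T_ε`, hence is zero.
-/

open MvPolynomial

namespace MvPolynomial

section Nullstellensatz

variable {K σ ι : Type*} [Field K]

theorem vanishingIdeal_union (V W : Set (σ → K)) :
    vanishingIdeal K (V ∪ W) = vanishingIdeal K V ⊓ vanishingIdeal K W := by
  ext p
  simp [or_imp, forall_and]

theorem vanishingIdeal_iUnion (V : ι → Set (σ → K)) :
    vanishingIdeal K (⋃ i, V i) = ⨅ i, vanishingIdeal K (V i) := by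
  ext p
  simp only [mem_vanishingIdeal_iff, Set.mem_iUnion, Submodule.mem_iInf]
  exact ⟨fun h i x hx => h x ⟨i, hx⟩, fun h x ⟨i, hx⟩ => h i x hx⟩

variable [IsAlgClosed K] [Finite σ] {I : Ideal (MvPolynomial σ K)}

theorem isRadical_iff_vanishingIdeal_zeroLocus_le :
    I.IsRadical ↔ vanishingIdeal K (zeroLocus K I) ≤ I := by
  rw [vanishingIdeal_zeroLocus_eq_radical]
  rfl

theorem _root_.Ideal.IsRadical.vanishingIdeal_zeroLocus (hI : I.IsRadical) :
    vanishingIdeal K (zeroLocus K I) = I :=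
  (vanishingIdeal_zeroLocus_eq_radical I).trans hI.radical

end Nullstellensatz

section KillVariables

variable {R σ : Type*}

theorem sub_aeval_indicator_compl_X_mem_span [CommRing R] (s : Set σ) (f : MvPolynomial σ R) :
    f - aeval (sᶜ.indicator X) f ∈ Ideal.span (X '' s) := by
  rw [← Ideal.Quotient.eq, ← Ideal.Quotient.mkₐ_eq_mk R, ← AlgHom.comp_apply]
  congr 1
  refine algHom_ext fun j => ?_
  by_cases hj : j ∈ s
  · have : X j ∈ Ideal.span (X '' s : Set (MvPolynomial σ R)) := Ideal.subset_span ⟨j, hj, rfl⟩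
    simpa [hj, eq_comm (a := (0 : _ ⧸ _)), Ideal.Quotient.eq_zero_iff_mem]
  · simp [hj]

theorem eval_aeval_indicator_compl_X [CommSemiring R] (s : Set σ) (x : σ → R)
    (f : MvPolynomial σ R) :
    eval x (aeval (sᶜ.indicator X) f) = eval (sᶜ.indicator x) f := by
  have hx : (fun j => eval x (sᶜ.indicator X j)) = sᶜ.indicator x := by
    funext j
    by_cases hj : j ∈ s <;> simp [hj]
  rw [← hx, ← aeval_eq_eval, aeval_eq_bind₁, aeval_bind₁]
  rfl

end KillVariables

section Radical

variable {K σ : Type*} [Field K] [IsAlgClosed K] [Finite σ]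

theorem isRadical_span_X_image_union (s : Set σ) {S : Set (MvPolynomial σ K)}
    (hS : (Ideal.span S).IsRadical) (hSs : ∀ g ∈ S, aeval (sᶜ.indicator X) g = g) :
    (Ideal.span (X '' s ∪ S)).IsRadical := by
  rw [isRadical_iff_vanishingIdeal_zeroLocus_le]
  intro f hf
  have hkill : aeval (sᶜ.indicator X) f ∈ Ideal.span S := by
    rw [← hS.vanishingIdeal_zeroLocus (K := K)]
    intro x hx
    rw [zeroLocus_span] at hx
    rw [aeval_eq_eval, eval_aeval_indicator_compl_X]
    refine hf _ ((zeroLocus_span _).ge ?_)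
    rintro p (⟨j, hj, rfl⟩ | hp)
    · simp [hj]
    · rw [aeval_eq_eval, ← eval_aeval_indicator_compl_X, hSs p hp]
      exact hx p hp
  rw [Ideal.span_union]
  simpa using Ideal.add_mem _ (Ideal.mem_sup_left (sub_aeval_indicator_compl_X_mem_span s f))
    (Ideal.mem_sup_right hkill)

theorem isRadical_span_X_image (s : Set σ) :
    (Ideal.span (X '' s : Set (MvPolynomial σ K))).IsRadical := by
  simpa using isRadical_span_X_image_union (K := K) s (S := ∅)
    (by simpa using Ideal.isRadical_bot) (by simp)

end Radical

section Quadric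

theorem optionEquivLeft_rename_some {R τ : Type*} [CommSemiring R] (c : MvPolynomial τ R) :
    optionEquivLeft R τ (rename some c) = Polynomial.C c := by
  induction c using MvPolynomial.induction_on with
  | C a => simp
  | add p q hp hq => simp [hp, hq]
  | mul_X p j hp => simp [hp]

variable {K σ τ : Type*} [Field K]

theorem eq_zero_of_eval_eq_zero_of_eval_ne_zero [Infinite K] {a c : MvPolynomial τ K}
    (hc : c ≠ 0) (h : ∀ y, eval y c ≠ 0 → eval y a = 0) : a = 0 := by
  have hac : a * c = 0 := funext fun y => by
    by_cases hy : eval y c = 0 <;> simp [hy, h]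
  simpa [hc] using hac

variable [IsAlgClosed K] [NeZero (2 : K)]

theorem X_sq_sub_C_dvd_of_eval_eq_zero {c : MvPolynomial τ K} (hc : c ≠ 0)
    {g : Polynomial (MvPolynomial τ K)}
    (hg : ∀ y t, t ^ 2 = eval y c → (g.map (eval y)).eval t = 0) :
    Polynomial.X ^ 2 - Polynomial.C c ∣ g := by
  set p : Polynomial (MvPolynomial τ K) := Polynomial.X ^ 2 - Polynomial.C c
  have hp : p.Monic := Polynomial.monic_X_pow_sub_C c two_ne_zero
  obtain ⟨a, b, hr⟩ : ∃ a b, g %ₘ p = Polynomial.C b * Polynomial.X + Polynomial.C a := by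
    refine ⟨_, _, Polynomial.eq_X_add_C_of_degree_le_one (Order.le_of_lt_succ ?_)⟩
    have := Polynomial.degree_modByMonic_lt g hp
    rwa [Polynomial.degree_X_pow_sub_C two_pos] at this
  have hroot : ∀ y t, t ^ 2 = eval y c → eval y b * t + eval y a = 0 := by
    intro y t ht
    have := hg y t ht
    rw [← Polynomial.modByMonic_add_div g p, hr] at this
    simpa [p, ht] using this
  have hzero : ∀ y, eval y c ≠ 0 → eval y b = 0 ∧ eval y a = 0 := by
    intro y hy
    obtain ⟨t, ht⟩ := IsAlgClosed.exists_pow_nat_eq (eval y c) two_pos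
    have hpos := hroot y t ht
    have hneg := hroot y (-t) (by rw [neg_sq, ht])
    have ht0 : t ≠ 0 := by rintro rfl; simp at ht; exact hy ht.symm
    constructor
    · have : (2 * t) * eval y b = 0 := by linear_combination hpos - hneg
      simpa [ht0, two_ne_zero] using this
    · have : 2 * eval y a = 0 := by linear_combination hpos + hneg
      simpa [two_ne_zero] using this
  rw [← Polynomial.modByMonic_eq_zero_iff_dvd hp, hr,
    eq_zero_of_eval_eq_zero_of_eval_ne_zero hc fun y hy => (hzero y hy).1,
    eq_zero_of_eval_eq_zero_of_eval_ne_zero hc fun y hy => (hzero y hy).2]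
  simp

theorem X_sq_sub_rename_dvd_of_eval_eq_zero (a : σ) {c : MvPolynomial {j // j ≠ a} K}
    (hc : c ≠ 0) {f : MvPolynomial σ K}
    (hf : ∀ x : σ → K, x a ^ 2 = eval (x ∘ Subtype.val) c → eval x f = 0) :
    X a ^ 2 - rename Subtype.val c ∣ f := by
  classical
  let e := (renameEquiv K (Equiv.optionSubtypeNe a).symm).trans (optionEquivLeft K _)
  have he : e (X a ^ 2 - rename Subtype.val c) = Polynomial.X ^ 2 - Polynomial.C c := by
    have hval : (Equiv.optionSubtypeNe a).symm ∘ Subtype.val = some := by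
      funext j
      exact Equiv.optionSubtypeNe_symm_of_ne j.2
    simp [e, rename_rename, hval, optionEquivLeft_rename_some]
  rw [← map_dvd_iff e, he]
  refine X_sq_sub_C_dvd_of_eval_eq_zero hc fun y t ht => ?_
  set x : σ → K := (fun o => o.elim t y) ∘ (Equiv.optionSubtypeNe a).symm
  have hxa : x a = t := by simp [x]
  have hxy : x ∘ Subtype.val = y := by
    funext j
    simp [x, Equiv.optionSubtypeNe_symm_of_ne j.2]
  change Polynomial.eval t (Polynomial.map (eval y) (optionEquivLeft K _ (rename _ f))) = 0
  rw [← optionEquivLeft_elim_eval, eval_rename]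
  exact hf x (by rw [hxa, hxy, ht])

variable [Finite σ]

theorem isRadical_span_X_sq_sub_rename (a : σ) {c : MvPolynomial {j // j ≠ a} K} (hc : c ≠ 0) :
    (Ideal.span {X a ^ 2 - rename Subtype.val c}).IsRadical := by
  rw [isRadical_iff_vanishingIdeal_zeroLocus_le]
  refine fun f hf => Ideal.mem_span_singleton.2 <|
    X_sq_sub_rename_dvd_of_eval_eq_zero a hc fun x hx => hf x ?_
  simp [zeroLocus_span, hx, eval_rename]

theorem isRadical_span_X_image_union_X_sq_sub (s : Set σ) {a b e : σ} (hb : b ≠ a) (he : e ≠ a)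
    (has : a ∉ s) (hbs : b ∉ s) (hes : e ∉ s) :
    (Ideal.span (X '' s ∪ {X a ^ 2 - X b ^ 2 * X e} : Set (MvPolynomial σ K))).IsRadical := by
  have hq : (X a ^ 2 - X b ^ 2 * X e : MvPolynomial σ K) =
      X a ^ 2 - rename Subtype.val (X ⟨b, hb⟩ ^ 2 * X ⟨e, he⟩ : MvPolynomial {j // j ≠ a} K) := by
    simp
  refine isRadical_span_X_image_union s ?_ ?_
  · rw [hq]
    exact isRadical_span_X_sq_sub_rename a
      (mul_ne_zero (pow_ne_zero _ (X_ne_zero _)) (X_ne_zero _))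
  · simp [has, hbs, hes]

end Quadric

end MvPolynomial

theorem isRadical_span_X_X_sq_sub {k : ℕ} (i : Fin k) :
    (Ideal.span ({X (Sum.inl 3), X (Sum.inr i),
      X (Sum.inl 0) ^ 2 - X (Sum.inl 1) ^ 2 * X (Sum.inl 4)} :
      Set (MvPolynomial (Fin 5 ⊕ Fin k) ℂ))).IsRadical := by
  have := isRadical_span_X_image_union_X_sq_sub (K := ℂ)
    ({Sum.inl 3, Sum.inr i} : Set (Fin 5 ⊕ Fin k))
    (a := Sum.inl 0) (b := Sum.inl 1) (e := Sum.inl 4)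
    (by simp) (by simp) (by simp) (by simp) (by simp)
  rwa [Set.image_insert_eq, Set.image_singleton, Set.insert_union, Set.singleton_union] at this

theorem fibre_equations_iff {k n : ℕ} (hn : n = 2 * k + 1) {z₁ z₂ z₃ z₄ ε : ℂ}
    {t : Fin k → ℂ} :
    (z₁ ^ 2 - z₂ ^ 2 * ε - 4 * z₃ ^ n * ∏ i, t i ^ (n - 2 * ((i : ℕ) + 1)) = 0 ∧
      z₁ * ∏ i, t i ^ ((i : ℕ) + 1) = 0 ∧ z₂ * z₄ * ε * ∏ i, t i ^ ((i : ℕ) + 1) = 0 ∧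
      z₃ * ∏ i, t i = 0 ∧ z₄ ^ 2 * ε = 0) ↔
    (((∃ i, z₄ = 0 ∧ t i = 0 ∧ z₁ ^ 2 - z₂ ^ 2 * ε = 0) ∨ ∃ i, z₁ = 0 ∧ ε = 0 ∧ t i = 0) ∨
        z₁ = 0 ∧ z₃ = 0 ∧ ε = 0) ∨ z₁ = 0 ∧ z₂ = 0 ∧ z₃ = 0 ∧ z₄ = 0 := by
  have hexp : ∀ i : Fin k, n - 2 * ((i : ℕ) + 1) ≠ 0 := fun i => by omega
  by_cases ht : ∃ i, t i = 0
  · obtain ⟨i, hi⟩ := ht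
    have hprod : ∀ e : Fin k → ℕ, (∀ i, e i ≠ 0) → ∏ i, t i ^ e i = 0 := fun e he =>
      Finset.prod_eq_zero (Finset.mem_univ i) (by simp [hi, he])
    simp only [hprod _ hexp, hprod _ fun _ => Nat.succ_ne_zero _,
      Finset.prod_eq_zero (Finset.mem_univ i) hi, mul_zero, sub_zero, true_and]
    constructor
    · rintro ⟨hq, h4⟩
      rcases mul_eq_zero.1 h4 with h4 | hε
      · exact Or.inl (Or.inl (Or.inl ⟨i, pow_eq_zero_iff two_ne_zero |>.1 h4, hi, hq⟩))
      · refine Or.inl (Or.inl (Or.inr ⟨i, ?_, hε, hi⟩))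
        simpa [hε] using hq
    · rintro (((⟨j, h4, -, hq⟩ | ⟨j, h1, hε, -⟩) | ⟨h1, -, hε⟩) | ⟨h1, h2, -, h4⟩) <;> simp [*]
  · push Not at ht
    have hprod : ∀ e : Fin k → ℕ, ∏ i, t i ^ e i ≠ 0 := fun e =>
      Finset.prod_ne_zero_iff.2 fun i _ => pow_ne_zero _ (ht i)
    simp only [mul_eq_zero, hprod, Finset.prod_ne_zero_iff.2 fun i _ => ht i, ht, or_false,
      false_and, and_false, exists_false, false_or]
    constructor
    · rintro ⟨hq, rfl, -, rfl, h4⟩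
      by_cases hε : ε = 0
      · exact Or.inl ⟨rfl, rfl, hε⟩
      · have hz₂ : z₂ ^ 2 * ε = 0 := by simpa [hn] using hq
        simp only [mul_eq_zero, hε, or_false, pow_eq_zero_iff two_ne_zero] at hz₂ h4
        exact Or.inr ⟨rfl, hz₂, rfl, h4⟩
    · rintro (⟨rfl, rfl, rfl⟩ | ⟨rfl, rfl, rfl, rfl⟩) <;> simp [hn]

/-- Variables `Sum.inl 0, …, Sum.inl 3` are `Z₁, …, Z₄`, `Sum.inl 4` is `T_ε` and `Sum.inr i`
is `T_{i+1}`. -/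
theorem stmt18_general (k : ℕ) (n : ℕ) (hn : n = 2 * k + 1)
    (I J : Ideal (MvPolynomial (Fin 5 ⊕ Fin k) ℂ))
    (hI : I = Ideal.span
      {X (Sum.inl 0) ^ 2 - X (Sum.inl 1) ^ 2 * X (Sum.inl 4)
        - 4 * X (Sum.inl 2) ^ n * ∏ i : Fin k, X (Sum.inr i) ^ (n - 2 * ((i : ℕ) + 1))})
    (hJ : J = I + Ideal.span
      { X (Sum.inl 0) * ∏ i : Fin k, X (Sum.inr i) ^ ((i : ℕ) + 1),
        X (Sum.inl 1) * X (Sum.inl 3) * X (Sum.inl 4)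
          * ∏ i : Fin k, X (Sum.inr i) ^ ((i : ℕ) + 1),
        X (Sum.inl 2) * ∏ i : Fin k, X (Sum.inr i),
        X (Sum.inl 3) ^ 2 * X (Sum.inl 4) }) :
    J.radical =
      (⨅ i : Fin k, Ideal.span
        ({X (Sum.inl 3), X (Sum.inr i),
          X (Sum.inl 0) ^ 2 - X (Sum.inl 1) ^ 2 * X (Sum.inl 4)} :
          Set (MvPolynomial (Fin 5 ⊕ Fin k) ℂ))) ⊓
      (⨅ i : Fin k, Ideal.span
        ({X (Sum.inl 0), X (Sum.inl 4), X (Sum.inr i)} :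
          Set (MvPolynomial (Fin 5 ⊕ Fin k) ℂ))) ⊓
      Ideal.span ({X (Sum.inl 0), X (Sum.inl 2), X (Sum.inl 4)} :
        Set (MvPolynomial (Fin 5 ⊕ Fin k) ℂ)) ⊓
      Ideal.span ({X (Sum.inl 0), X (Sum.inl 1), X (Sum.inl 2), X (Sum.inl 3)} :
        Set (MvPolynomial (Fin 5 ⊕ Fin k) ℂ)) := by
  subst hI hJ
  have hX (s : Set (Fin 5 ⊕ Fin k)) :=
    (isRadical_span_X_image (K := ℂ) s).vanishingIdeal_zeroLocus (K := ℂ)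
  have hQ (i : Fin k) := hX {Sum.inl 0, Sum.inl 4, Sum.inr i}
  have hQ' := hX {Sum.inl 0, Sum.inl 2, Sum.inl 4}
  have hM := hX {Sum.inl 0, Sum.inl 1, Sum.inl 2, Sum.inl 3}
  simp only [Set.image_insert_eq, Set.image_singleton] at hQ hQ' hM
  rw [← vanishingIdeal_zeroLocus_eq_radical (K := ℂ),
    ← iInf_congr fun i => (isRadical_span_X_X_sq_sub i).vanishingIdeal_zeroLocus (K := ℂ),
    ← iInf_congr hQ, ← hQ', ← hM,
    ← vanishingIdeal_iUnion, ← vanishingIdeal_iUnion, ← vanishingIdeal_union,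
    ← vanishingIdeal_union, ← vanishingIdeal_union]
  congr 1
  ext x
  simp only [Ideal.add_eq_sup, ← Ideal.span_union, zeroLocus_span, Set.mem_union,
    Set.mem_iUnion, Set.singleton_union, Set.mem_ofPred_eq, Set.forall_mem_insert,
    Set.mem_singleton_iff, forall_eq, aeval_eq_eval, map_sub, map_mul, map_pow, map_prod,
    eval_X, map_ofNat]
  exact fibre_equations_iff (t := fun i => x (Sum.inr i)) hn

/-- for `n = 2k+1 ≥ 3` odd, in `R = ℂ[Z₁,Z₂,Z₃,Z₄,T_ε,T₁,…,T_k]`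
(variables `Sum.inl 0,…,Sum.inl 3` are `Z₁,…,Z₄`, `Sum.inl 4` is `T_ε`, and
`Sum.inr i` is `T_{i+1}`), the radical of `J_k` equals the stated intersection
of `2k+2` ideals. -/
theorem stmt18 (k : ℕ) (hk : 1 ≤ k) (n : ℕ) (hn : n = 2 * k + 1)
    (I J : Ideal (MvPolynomial (Fin 5 ⊕ Fin k) ℂ))
    (hI : I = Ideal.span
      {X (Sum.inl 0) ^ 2 - X (Sum.inl 1) ^ 2 * X (Sum.inl 4)
        - 4 * X (Sum.inl 2) ^ n * ∏ i : Fin k, X (Sum.inr i) ^ (n - 2 * ((i : ℕ) + 1))})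
    (hJ : J = I + Ideal.span
      { X (Sum.inl 0) * ∏ i : Fin k, X (Sum.inr i) ^ ((i : ℕ) + 1),
        X (Sum.inl 1) * X (Sum.inl 3) * X (Sum.inl 4)
          * ∏ i : Fin k, X (Sum.inr i) ^ ((i : ℕ) + 1),
        X (Sum.inl 2) * ∏ i : Fin k, X (Sum.inr i),
        X (Sum.inl 3) ^ 2 * X (Sum.inl 4) }) :
    J.radical =
      (⨅ i : Fin k, Ideal.span
        ({X (Sum.inl 3), X (Sum.inr i),
          X (Sum.inl 0) ^ 2 - X (Sum.inl 1) ^ 2 * X (Sum.inl 4)} :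
          Set (MvPolynomial (Fin 5 ⊕ Fin k) ℂ))) ⊓
      (⨅ i : Fin k, Ideal.span
        ({X (Sum.inl 0), X (Sum.inl 4), X (Sum.inr i)} :
          Set (MvPolynomial (Fin 5 ⊕ Fin k) ℂ))) ⊓
      Ideal.span ({X (Sum.inl 0), X (Sum.inl 2), X (Sum.inl 4)} :
        Set (MvPolynomial (Fin 5 ⊕ Fin k) ℂ)) ⊓
      Ideal.span ({X (Sum.inl 0), X (Sum.inl 1), X (Sum.inl 2), X (Sum.inl 3)} :
        Set (MvPolynomial (Fin 5 ⊕ Fin k) ℂ)) :=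
  stmt18_general k n hn I J hI hJ
end
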